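/- arXiv:1512.08261 — 9 statements merged into one kernel-verified Lean document; each statement's English description precedes it below -/
import Mathlib

section
/- No linear polynomial F(x,y) = a·x + b·y + c with real coefficients is injective as a function from ℕ² to ℕ (i.e., there is no linear polynomial that maps ℕ² injectively into ℕ). -/
theorem no_linear_storing_function (a b c : ℝ) :
    ¬ ((∀ p : ℕ × ℕ, ∃ n : ℕ, a * p.1 + b * p.2 + c = n) ∧
        Function.Injective (fun p : ℕ × ℕ => a * p.1 + b * p.2 + c)) := by
  rintro ⟨hval, hinj⟩
  obtain ⟨n0, h0⟩ := hval (0, 0)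
  obtain ⟨n1, h1⟩ := hval (1, 0)
  obtain ⟨n2, h2⟩ := hval (0, 1)
  simp at h0 h1 h2
  have hane : a ≠ 0 := by
    intro h
    have heq : ((1, 0) : ℕ × ℕ) = (0, 0) := hinj (by simp [h])
    simp at heq
  have hbne : b ≠ 0 := by
    intro h
    have heq : ((0, 1) : ℕ × ℕ) = (0, 0) := hinj (by simp [h])
    simp at heq
  have hapos : 0 < a := by
    by_contra h
    push_neg at h
    have ha1 : a ≤ -1 := by
      have hlt : (n1 : ℝ) < n0 := by linarith [lt_of_le_of_ne h hane]
      have : n1 < n0 := by exact_mod_cast hlt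
      have : (n1 : ℝ) + 1 ≤ n0 := by exact_mod_cast this
      linarith
    obtain ⟨m, hm⟩ := hval (n0 + 1, 0)
    simp at hm
    push_cast at hm
    have hmn : (0 : ℝ) ≤ m := m.cast_nonneg
    nlinarith [n0.cast_nonneg (α := ℝ)]
  have hbpos : 0 < b := by
    by_contra h
    push_neg at h
    have hb1 : b ≤ -1 := by
      have hlt : (n2 : ℝ) < n0 := by linarith [lt_of_le_of_ne h hbne]
      have : n2 < n0 := by exact_mod_cast hlt
      have : (n2 : ℝ) + 1 ≤ n0 := by exact_mod_cast this
      linarith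
    obtain ⟨m, hm⟩ := hval (0, n0 + 1)
    simp at hm
    push_cast at hm
    have hmn : (0 : ℝ) ≤ m := m.cast_nonneg
    nlinarith [n0.cast_nonneg (α := ℝ)]
  have hn01 : n0 < n1 := by
    have : (n0 : ℝ) < n1 := by linarith
    exact_mod_cast this
  have hn02 : n0 < n2 := by
    have : (n0 : ℝ) < n2 := by linarith
    exact_mod_cast this
  set A := n1 - n0 with hA
  set B := n2 - n0 with hB
  have hAc : (A : ℝ) = a := by
    rw [hA, Nat.cast_sub hn01.le]; linarith
  have hBc : (B : ℝ) = b := by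
    rw [hB, Nat.cast_sub hn02.le]; linarith
  have heq : ((B, 0) : ℕ × ℕ) = (0, A) := by
    apply hinj
    simp only
    push_cast
    rw [hAc, hBc]
    ring
  have hB0 : B = 0 := by simpa using congrArg Prod.fst heq
  omega
end

section
/- Let m ≥ 2 and ℓ ≥ 0, and let S = {x ∈ ℕ^m : every coordinate of x is ≥ ℓ}. Then no linear polynomial F(x₁,...,x_m) = a₁x₁ + ⋯ + a_m x_m + c with real coefficients maps S injectively into ℕ. -/
theorem no_linear_storing_function_on_shifted_octant
    (m : ℕ) (hm : 2 ≤ m) (ℓ : ℕ) (a : Fin m → ℝ) (c : ℝ) :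
    ¬ ((∀ x : Fin m → ℕ, (∀ i, ℓ ≤ x i) →
          ∃ n : ℕ, (∑ i, a i * x i) + c = n) ∧
        Set.InjOn (fun x : Fin m → ℕ => (∑ i, a i * x i) + c)
          {x | ∀ i, ℓ ≤ x i}) := by
  rintro ⟨hN, hInj⟩
  have hm0 : 0 < m := by omega
  have hm1 : 1 < m := hm
  set i0 : Fin m := ⟨0, hm0⟩ with hi0
  set i1 : Fin m := ⟨1, hm1⟩ with hi1
  have hne : i0 ≠ i1 := by simp [hi0, hi1, Fin.ext_iff]
  -- the family of test points
  set P : ℕ → ℕ → (Fin m → ℕ) :=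
    fun u v j => if j = i0 then ℓ + u else if j = i1 then ℓ + v else ℓ with hP
  have hPS : ∀ u v, P u v ∈ {x : Fin m → ℕ | ∀ i, ℓ ≤ x i} := by
    intro u v j
    simp only [hP]
    split_ifs <;> omega
  have hPval : ∀ u v j, (P u v j : ℝ) =
      (ℓ : ℝ) + (if j = i0 then (u : ℝ) else 0) + (if j = i1 then (v : ℝ) else 0) := by
    intro u v j
    simp only [hP]
    rcases eq_or_ne j i0 with rfl | h0
    · simp [hne]
    · rcases eq_or_ne j i1 with rfl | h1
      · simp [h0]
      · simp [h0, h1]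
  have hG : ∀ u v, (∑ j, a j * (P u v j : ℝ)) =
      (∑ j, a j * (ℓ : ℝ)) + a i0 * u + a i1 * v := by
    intro u v
    have : ∀ j ∈ Finset.univ, a j * (P u v j : ℝ) =
        a j * (ℓ : ℝ) + (if j = i0 then a j * u else 0) + (if j = i1 then a j * v else 0) := by
      intro j _
      rw [hPval u v j]
      split_ifs <;> ring
    rw [Finset.sum_congr rfl this]
    simp [Finset.sum_add_distrib, Finset.sum_ite_eq']
  -- values at the basic points
  obtain ⟨n00, h00⟩ := hN (P 0 0) (hPS 0 0)
  obtain ⟨n10, h10⟩ := hN (P 1 0) (hPS 1 0)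
  obtain ⟨n01, h01⟩ := hN (P 0 1) (hPS 0 1)
  set z0 : ℤ := (n10 : ℤ) - n00 with hz0def
  set z1 : ℤ := (n01 : ℤ) - n00 with hz1def
  have ha0 : a i0 = (z0 : ℝ) := by
    have : (∑ j, a j * (P 1 0 j : ℝ)) + c - ((∑ j, a j * (P 0 0 j : ℝ)) + c) = a i0 := by
      rw [hG, hG]; push_cast; ring
    rw [h10, h00] at this
    rw [← this, hz0def]; push_cast; ring
  have ha1 : a i1 = (z1 : ℝ) := by
    have : (∑ j, a j * (P 0 1 j : ℝ)) + c - ((∑ j, a j * (P 0 0 j : ℝ)) + c) = a i1 := by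
      rw [hG, hG]; push_cast; ring
    rw [h01, h00] at this
    rw [← this, hz1def]; push_cast; ring
  have hP0 : ∀ u v u' v', P u v = P u' v' → u = u' ∧ v = v' := by
    intro u v u' v' hPP
    have h0 := congrFun hPP i0
    have h1 := congrFun hPP i1
    simp [hP, hne, Ne.symm hne] at h0 h1
    omega
  -- the coefficients are nonzero
  have hz0ne : z0 ≠ 0 := by
    intro h
    have hPP : P 1 0 = P 0 0 := hInj (hPS 1 0) (hPS 0 0) (by
      show (∑ j, a j * (P 1 0 j : ℝ)) + c = (∑ j, a j * (P 0 0 j : ℝ)) + c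
      rw [hG, hG, ha0, h]; push_cast; ring)
    exact absurd (hP0 1 0 0 0 hPP).1 (by omega)
  have hz1ne : z1 ≠ 0 := by
    intro h
    have hPP : P 0 1 = P 0 0 := hInj (hPS 0 1) (hPS 0 0) (by
      show (∑ j, a j * (P 0 1 j : ℝ)) + c = (∑ j, a j * (P 0 0 j : ℝ)) + c
      rw [hG, hG, ha1, h]; push_cast; ring)
    exact absurd (hP0 0 1 0 0 hPP).2 (by omega)
  -- build a collision
  rcases lt_trichotomy (z0 * z1) 0 with hsign | hsign | hsign
  · -- opposite signs : P |z1| |z0| collides with P 0 0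
    have hkey : (z0 : ℝ) * |(z1 : ℝ)| + (z1 : ℝ) * |(z0 : ℝ)| = 0 := by
      rcases lt_or_gt_of_ne hz0ne with h0 | h0
      · have h1 : 0 < z1 := by nlinarith
        have h0' : (z0 : ℝ) < 0 := by exact_mod_cast h0
        have h1' : (0 : ℝ) < z1 := by exact_mod_cast h1
        rw [abs_of_pos h1', abs_of_neg h0']; ring
      · have h1 : z1 < 0 := by nlinarith
        have h0' : (0 : ℝ) < z0 := by exact_mod_cast h0
        have h1' : (z1 : ℝ) < 0 := by exact_mod_cast h1
        rw [abs_of_neg h1', abs_of_pos h0']; ring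
    have hPP : P z1.natAbs z0.natAbs = P 0 0 := hInj (hPS _ _) (hPS 0 0) (by
      show (∑ j, a j * (P z1.natAbs z0.natAbs j : ℝ)) + c
          = (∑ j, a j * (P 0 0 j : ℝ)) + c
      rw [hG, hG, ha0, ha1, Nat.cast_natAbs, Nat.cast_natAbs]
      push_cast
      linarith)
    have := (hP0 _ _ _ _ hPP).1
    simp [Int.natAbs_eq_zero, hz1ne] at this
  · exact absurd hsign (by simp [mul_eq_zero, hz0ne, hz1ne])
  · -- same sign : P |z1| 0 collides with P 0 |z0|
    have hkey : (z0 : ℝ) * |(z1 : ℝ)| = (z1 : ℝ) * |(z0 : ℝ)| := by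
      rcases lt_or_gt_of_ne hz0ne with h0 | h0
      · have h1 : z1 < 0 := by nlinarith
        have h0' : (z0 : ℝ) < 0 := by exact_mod_cast h0
        have h1' : (z1 : ℝ) < 0 := by exact_mod_cast h1
        rw [abs_of_neg h1', abs_of_neg h0']; ring
      · have h1 : 0 < z1 := by nlinarith
        have h0' : (0 : ℝ) < z0 := by exact_mod_cast h0
        have h1' : (0 : ℝ) < z1 := by exact_mod_cast h1
        rw [abs_of_pos h1', abs_of_pos h0']; ring
    have hPP : P z1.natAbs 0 = P 0 z0.natAbs := hInj (hPS _ _) (hPS _ _) (by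
      show (∑ j, a j * (P z1.natAbs 0 j : ℝ)) + c
          = (∑ j, a j * (P 0 z0.natAbs j : ℝ)) + c
      rw [hG, hG, ha0, ha1, Nat.cast_natAbs, Nat.cast_natAbs]
      push_cast
      linarith)
    have := (hP0 _ _ _ _ hPP).1
    simp [Int.natAbs_eq_zero, hz1ne] at this
end

section
/- If D is a nonzero integer that is not a perfect square and ℓ is a nonzero integer, then there exists a prime p not dividing ℓ such that D is a quadratic non-residue modulo p. -/
open NumberTheorySymbols

/-- If `a ≡ 1 mod 8` and `a ≡ 1 mod k`, then `J(k | a) = 1`. -/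
lemma jacobi_one_of_modeq : ∀ (k a : ℕ), a % 8 = 1 → a ≡ 1 [MOD k] → J((k : ℤ) | a) = 1 := by
  intro k
  induction k using Nat.strong_induction_on with
  | _ k ih =>
    intro a h8 hk
    have ha4 : a % 4 = 1 := by omega
    have haodd : Odd a := Nat.odd_iff.mpr (by omega)
    rcases eq_or_ne k 0 with rfl | hk0
    · have : a = 1 := by simpa [Nat.ModEq] using hk
      subst this
      simp [jacobiSym]
    rcases Nat.even_or_odd k with hke | hko
    · obtain ⟨k', rfl⟩ : ∃ k', k = 2 * k' := ⟨k / 2, by have := Nat.even_iff.mp hke; omega⟩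
      have hk' : a ≡ 1 [MOD k'] := hk.of_dvd ⟨2, by ring⟩
      have hlt : k' < 2 * k' := by omega
      have hIH := ih k' hlt a h8 hk'
      have : ((2 * k' : ℕ) : ℤ) = 2 * (k' : ℤ) := by push_cast; ring
      rw [this, jacobiSym.mul_left, jacobiSym.at_two haodd, hIH]
      rw [ZMod.χ₈_nat_mod_eight, h8]
      decide
    · rw [show ((k : ℕ) : ℤ) = ((k : ℕ) : ℤ) from rfl,
        jacobiSym.quadratic_reciprocity_one_mod_four' hko ha4]
      have hmod : ((a : ℤ)) % k = (1 : ℤ) % k := by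
        have := hk
        unfold Nat.ModEq at this
        exact_mod_cast congrArg (Nat.cast : ℕ → ℤ) this
      rw [jacobiSym.mod_left' hmod, jacobiSym.one_left]

/-- A squarefree natural number other than 1 and 2 has an odd prime divisor. -/
lemma exists_odd_prime_dvd {n : ℕ} (hn : Squarefree n) (h1 : n ≠ 1) (h2 : n ≠ 2) :
    ∃ q, q.Prime ∧ q ≠ 2 ∧ q ∣ n := by
  have hn0 : n ≠ 0 := hn.ne_zero
  rcases Nat.even_or_odd n with hne | hno
  · obtain ⟨m, rfl⟩ : ∃ m, n = 2 * m := ⟨n / 2, by have := Nat.even_iff.mp hne; omega⟩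
    have hsf := Nat.squarefree_mul_iff.mp hn
    have hm1 : m ≠ 1 := by rintro rfl; exact h2 rfl
    have hm0 : m ≠ 0 := by rintro rfl; exact hn0 rfl
    obtain ⟨q, hq, hqd⟩ := Nat.exists_prime_and_dvd hm1
    refine ⟨q, hq, ?_, hqd.mul_left 2⟩
    rintro rfl
    have : ¬ (2 ∣ m) := Nat.Prime.coprime_iff_not_dvd Nat.prime_two |>.mp hsf.1
    exact this hqd
  · obtain ⟨q, hq, hqd⟩ := Nat.exists_prime_and_dvd h1
    refine ⟨q, hq, ?_, hqd⟩
    rintro rfl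
    exact (Nat.not_odd_iff_even.mpr (even_iff_two_dvd.mpr hqd)) hno

/-- Key lemma: for `ε = ±1` and `n` squarefree with `ε * n ≠ 1`, there is a residue class
`a₀` coprime to `8 * n` on which the Jacobi symbol `J(ε * n | ·)` takes the value `-1`. -/
lemma exists_jacobi_neg_one (ε : ℤ) (n : ℕ) (hε : ε = 1 ∨ ε = -1) (hn : Squarefree n)
    (hne : ¬(ε = 1 ∧ n = 1)) :
    ∃ a₀ : ℕ, a₀.Coprime (8 * n) ∧ J(ε * (n : ℤ) | a₀) = -1 := by
  rcases eq_or_ne n 1 with rfl | h1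
  · -- n = 1, so ε = -1
    have hε' : ε = -1 := by tauto
    subst hε'
    refine ⟨3, by decide, ?_⟩
    have : (-1 : ℤ) * ((1 : ℕ) : ℤ) = -1 := by norm_num
    rw [this, jacobiSym.at_neg_one (by decide : Odd 3), ZMod.χ₄_nat_three_mod_four rfl]
  rcases eq_or_ne n 2 with rfl | h2
  · refine ⟨5, by decide, ?_⟩
    rcases hε with rfl | rfl
    · have : (1 : ℤ) * ((2 : ℕ) : ℤ) = 2 := by norm_num
      rw [this, jacobiSym.at_two (by decide : Odd 5), ZMod.χ₈_nat_eq_if_mod_eight]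
      norm_num
    · have : (-1 : ℤ) * ((2 : ℕ) : ℤ) = -2 := by norm_num
      rw [this, jacobiSym.at_neg_two (by decide : Odd 5), ZMod.χ₈'_nat_eq_if_mod_eight]
      norm_num
  -- main case: n has an odd prime divisor q
  obtain ⟨q, hq, hq2, hqd⟩ := exists_odd_prime_dvd hn h1 h2
  obtain ⟨m, rfl⟩ := hqd
  haveI : Fact q.Prime := ⟨hq⟩
  have hsf := Nat.squarefree_mul_iff.mp hn
  have hqm : Nat.Coprime q m := hsf.1
  -- a nonresidue mod q
  have hchar : ringChar (ZMod q) ≠ 2 := by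
    rw [ZMod.ringChar_zmod_n]; exact hq2
  obtain ⟨b, hb⟩ := FiniteField.exists_nonsquare hchar
  set c : ℕ := b.val with hc
  have hcb : ((c : ℕ) : ZMod q) = b := ZMod.natCast_rightInverse b
  have hleg : legendreSym q c = -1 := by
    rw [legendreSym.eq_neg_one_iff']
    rw [hcb]; exact hb
  have hb0 : b ≠ 0 := by rintro rfl; exact hb ⟨0, by simp⟩
  have hcq : Nat.Coprime c q := by
    rw [Nat.coprime_comm]
    refine (Nat.Prime.coprime_iff_not_dvd hq).mpr ?_
    intro hd
    exact hb0 (by rw [← hcb]; exact_mod_cast (ZMod.natCast_eq_zero_iff c q).mpr hd)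
  -- CRT
  have hco : Nat.Coprime q (8 * m) := by
    have h8 : Nat.Coprime q 8 := by
      have : Nat.Coprime q 2 := (Nat.coprime_primes hq Nat.prime_two).mpr hq2
      simpa using this.pow_right 3
    exact Nat.Coprime.mul_right h8 hqm
  obtain ⟨a₀, ha₀q, ha₀m⟩ := Nat.chineseRemainder hco c 1
  have ha8 : a₀ % 8 = 1 := by
    have : a₀ ≡ 1 [MOD 8] := ha₀m.of_dvd ⟨m, rfl⟩
    simpa [Nat.ModEq] using this
  have ha4 : a₀ % 4 = 1 := by omega
  have haodd : Odd a₀ := Nat.odd_iff.mpr (by omega)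
  have hqodd : Odd q := hq.odd_of_ne_two hq2
  -- coprimality of a₀ to 8 * (q * m)
  have hcop : a₀.Coprime (8 * (q * m)) := by
    have h1' : a₀.Coprime q := by
      have : Nat.gcd a₀ q = Nat.gcd c q := Nat.ModEq.gcd_eq ha₀q
      rw [Nat.Coprime, this]; exact hcq
    have h2' : a₀.Coprime (8 * m) := by
      have : Nat.gcd a₀ (8 * m) = Nat.gcd 1 (8 * m) := Nat.ModEq.gcd_eq ha₀m
      rw [Nat.Coprime, this]; exact Nat.gcd_one_left _
    have := Nat.Coprime.mul_right h1' h2'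
    -- a₀.Coprime (q * (8 * m)) → a₀.Coprime (8 * (q * m))
    rwa [show q * (8 * m) = 8 * (q * m) by ring] at this
  refine ⟨a₀, hcop, ?_⟩
  -- compute the Jacobi symbol
  have hmain : ((q * m : ℕ) : ℤ) = (q : ℤ) * (m : ℤ) := by push_cast; ring
  rw [jacobiSym.mul_left, hmain, jacobiSym.mul_left]
  have hJq : J((q : ℤ) | a₀) = -1 := by
    rw [jacobiSym.quadratic_reciprocity_one_mod_four' hqodd ha4]
    have hmod : ((a₀ : ℤ)) % q = ((c : ℤ)) % q := by
      have := ha₀q; unfold Nat.ModEq at this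
      exact_mod_cast congrArg (Nat.cast : ℕ → ℤ) this
    rw [jacobiSym.mod_left' hmod, ← jacobiSym.legendreSym.to_jacobiSym]
    exact hleg
  have hJm : J((m : ℤ) | a₀) = 1 :=
    jacobi_one_of_modeq m a₀ ha8 (ha₀m.of_dvd ⟨8, by ring⟩)
  have hJε : J(ε | a₀) = 1 := by
    rcases hε with rfl | rfl
    · exact jacobiSym.one_left a₀
    · rw [jacobiSym.at_neg_one haodd, ZMod.χ₄_nat_one_mod_four ha4]
  rw [hJε, hJq, hJm]; ring

theorem exists_prime_nonresidue (D ℓ : ℤ) (hD : D ≠ 0)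
    (hDsq : ¬ ∃ t : ℤ, D = t ^ 2) (hℓ : ℓ ≠ 0) :
    ∃ p : ℕ, p.Prime ∧ ¬ ((p : ℤ) ∣ ℓ) ∧ ∀ x : ℤ, ¬ (x ^ 2 ≡ D [ZMOD p]) := by
  obtain ⟨n, s, hns, hn⟩ := Nat.sq_mul_squarefree D.natAbs
  have hN0 : D.natAbs ≠ 0 := Int.natAbs_ne_zero.mpr hD
  have hn0 : n ≠ 0 := by rintro rfl; simp at hns; omega
  have hs0 : s ≠ 0 := by rintro rfl; simp at hns; omega
  set ε : ℤ := D.sign with hε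
  have hεval : ε = 1 ∨ ε = -1 := by
    rcases hD.lt_or_gt with h | h
    · right; simpa [hε] using Int.sign_eq_neg_one_of_neg h
    · left; simpa [hε] using Int.sign_eq_one_of_pos h
  have hDd : D = (s : ℤ) ^ 2 * (ε * n) := by
    have h1 : ε * (D.natAbs : ℤ) = D := Int.sign_mul_natAbs D
    rw [← h1, ← hns]
    push_cast
    ring
  have hne : ¬(ε = 1 ∧ n = 1) := by
    rintro ⟨he, rfl⟩
    exact hDsq ⟨(s : ℤ), by rw [hDd, he]; push_cast; ring⟩
  obtain ⟨a₀, hcop, hJ⟩ := exists_jacobi_neg_one ε n hεval hn hne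
  haveI : NeZero (8 * n) := ⟨by positivity⟩
  have hunit : IsUnit ((a₀ : ZMod (8 * n))) := (ZMod.isUnit_iff_coprime a₀ (8 * n)).mpr hcop
  obtain ⟨p, hpgt, hp, hpmod⟩ :=
    Nat.forall_exists_prime_gt_and_eq_mod hunit (D.natAbs + ℓ.natAbs)
  haveI : Fact p.Prime := ⟨hp⟩
  have hmodeq : p ≡ a₀ [MOD 8 * n] := (ZMod.natCast_eq_natCast_iff p a₀ (8 * n)).mp hpmod
  have hpcop : p.Coprime (8 * n) := by
    rw [Nat.Coprime, Nat.ModEq.gcd_eq hmodeq]; exact hcop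
  have hpodd : Odd p := by
    refine hp.odd_of_ne_two ?_
    rintro rfl
    have : ¬ (2 ∣ 8 * n) := (Nat.Prime.coprime_iff_not_dvd Nat.prime_two).mp hpcop
    exact this ⟨4 * n, by ring⟩
  have ha₀odd : Odd a₀ := by
    refine Nat.odd_iff.mpr ?_
    by_contra h
    have h2 : (2 : ℕ) ∣ a₀ := by omega
    have : (2 : ℕ) ∣ 1 := hcop ▸ Nat.dvd_gcd h2 ⟨4 * n, by ring⟩
    omega
  -- p does not divide ℓ
  have hpℓ : ¬ ((p : ℤ) ∣ ℓ) := by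
    intro hd
    have : p ∣ ℓ.natAbs := Int.ofNat_dvd.mp (Int.dvd_natAbs.mpr hd)
    have := Nat.le_of_dvd (Int.natAbs_pos.mpr hℓ) this
    omega
  refine ⟨p, hp, hpℓ, ?_⟩
  -- the Legendre symbol of D at p is -1
  have hnatAbs : (ε * (n : ℤ)).natAbs = n := by
    rcases hεval with he | he <;> simp [he]
  have hJp : J(ε * (n : ℤ) | p) = -1 := by
    rw [jacobiSym.mod_right _ hpodd, hnatAbs]
    rw [jacobiSym.mod_right (ε * n) ha₀odd, hnatAbs] at hJ
    have h4n : p % (4 * n) = a₀ % (4 * n) := hmodeq.of_dvd ⟨2, by ring⟩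
    rw [h4n]; exact hJ
  have hps : ¬ (p ∣ s) := by
    intro hd
    have hsn : s ≤ D.natAbs := by
      calc s ≤ s ^ 2 := by nlinarith [Nat.one_le_iff_ne_zero.mpr hs0]
        _ ≤ s ^ 2 * n := Nat.le_mul_of_pos_right _ (Nat.pos_of_ne_zero hn0)
        _ = D.natAbs := hns
    have := Nat.le_of_dvd (Nat.pos_of_ne_zero hs0) hd
    omega
  have hsz : ((s : ℤ) : ZMod p) ≠ 0 := by
    intro h
    have : ((s : ℕ) : ZMod p) = 0 := by exact_mod_cast h
    exact hps ((ZMod.natCast_eq_zero_iff s p).mp this)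
  have hlegD : legendreSym p D = -1 := by
    rw [hDd, legendreSym.mul, legendreSym.sq_one' (p := p) hsz, one_mul,
      jacobiSym.legendreSym.to_jacobiSym]
    exact hJp
  have hnsq : ¬ IsSquare ((D : ZMod p)) := (legendreSym.eq_neg_one_iff p).mp hlegD
  intro x hx
  apply hnsq
  have : ((x ^ 2 : ℤ) : ZMod p) = ((D : ℤ) : ZMod p) :=
    (ZMod.intCast_eq_intCast_iff _ _ _).mpr hx
  exact ⟨(x : ZMod p), by push_cast at this; rw [← this]; ring⟩
end

section
/- If F(x,y) = (a x² + 2b x y + c y²)/2 + (d x + e y)/2 + f is a quadratic packing polynomial (a bijection from ℕ² to ℕ), then the quadratic form Q(x,y) = (a x² + 2b x y + c y²)/2 satisfies Q(x,y) > 0 for all (x,y) ∈ ℕ² with (x,y) ≠ (0,0). -/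
/-!
Along the ray `t ↦ t • p`, `F` is a quadratic polynomial in `t` with leading coefficient `Q p`;
since `F` takes values in `ℕ`, `Q p ≥ 0`. If `Q (x, y) = 0` with `y ≠ 0`, the rays
`t ↦ (m + t x, t y)`, `m ∈ ℕ`, are pairwise disjoint and `F` is affine on each of them, with slope
`(d x + e y) / 2 + m (a x + b y)`. But disjoint arithmetic progressions in `ℕ` with slopes `σᵢ`
satisfy `∑ 1 / σᵢ ≤ 1` (count their terms below `N`), while the reciprocals of these slopes
diverge like the harmonic series. The case `y = 0` is the same after swapping coordinates.
-/

open Finset Function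

section Archimedean

variable {K : Type*} [Field K] [LinearOrder K] [IsStrictOrderedRing K] [Archimedean K]

lemma nonneg_of_forall_nat_affine_nonneg {σ γ : K} (h : ∀ t : ℕ, 0 ≤ σ * t + γ) : 0 ≤ σ := by
  by_contra! hσ
  obtain ⟨t, ht⟩ := exists_nat_gt (γ / -σ)
  rw [div_lt_iff₀ (neg_pos.mpr hσ)] at ht
  linarith [h t]

lemma nonneg_of_forall_nat_quadratic_nonneg {A B C : K}
    (h : ∀ t : ℕ, 0 ≤ A * t ^ 2 + B * t + C) : 0 ≤ A := by
  refine nonneg_of_forall_nat_affine_nonneg (γ := A + |B| + |C|) fun s => ?_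
  have ht : (1 : K) ≤ s + 1 := by simp
  have hs := h (s + 1)
  push_cast at hs
  refine nonneg_of_mul_nonneg_right (a := (s + 1 : K)) ?_ (by linarith)
  nlinarith [le_abs_self B, le_abs_self C, abs_nonneg B, abs_nonneg C]

end Archimedean

lemma exists_lt_harmonic (C : ℚ) : ∃ n, C < harmonic n := by
  obtain ⟨n, hn⟩ := exists_nat_gt (Real.exp C)
  refine ⟨n, ?_⟩
  have hlog : (C : ℝ) < Real.log (n + 1 : ℕ) :=
    (Real.lt_log_iff_exp_lt (by positivity)).mpr (by push_cast; linarith)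
  exact_mod_cast hlog.trans_le (log_add_one_le_harmonic n)

lemma pos_of_injective_affine {u : ℕ → ℕ} (hu : Injective u) {σ γ : ℚ}
    (h : ∀ t, (u t : ℚ) = σ * t + γ) : 0 < σ := by
  refine (nonneg_of_forall_nat_affine_nonneg fun t => h t ▸ Nat.cast_nonneg _).lt_of_ne' ?_
  rintro rfl
  have h01 : (u 0 : ℚ) = u 1 := by rw [h, h]; ring
  exact zero_ne_one (hu (by exact_mod_cast h01))

lemma sum_inv_slope_le_one {ι : Type*} {u : ι × ℕ → ℕ} (hu : Injective u) {σ γ : ι → ℚ}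
    (h : ∀ i t, (u (i, t) : ℚ) = σ i * t + γ i) (s : Finset ι) :
    ∑ i ∈ s, (σ i)⁻¹ ≤ 1 := by
  have hσ i : 0 < σ i := pos_of_injective_affine (hu.comp (Prod.mk_right_injective i)) (h i)
  have hcount (N : ℕ) : ∑ i ∈ s, ((N : ℚ) - γ i) / σ i ≤ N := by
    let T i := ⌈((N : ℚ) - γ i) / σ i⌉₊
    have hcard : ∑ i ∈ s, T i ≤ N := by
      calc ∑ i ∈ s, T i = #(s.sigma fun i => range (T i)) := by simp [card_sigma]
        _ ≤ #(range N) := card_le_card_of_injOn (fun q => u (q.1, q.2)) ?_ ?_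
        _ = N := card_range N
      · rintro ⟨i, t⟩ hq
        simp only [coe_sigma, Set.mem_sigma_iff, coe_range, Set.mem_Iio, T, Nat.lt_ceil,
          lt_div_iff₀ (hσ i)] at hq
        have hlt : (u (i, t) : ℚ) < N := by rw [h]; linarith
        simpa using hlt
      · rintro ⟨i, t⟩ - ⟨i', t'⟩ - heq
        cases hu heq
        rfl
    calc ∑ i ∈ s, ((N : ℚ) - γ i) / σ i ≤ ∑ i ∈ s, (T i : ℚ) :=
          sum_le_sum fun i _ => Nat.le_ceil _
      _ ≤ N := by exact_mod_cast hcard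
  suffices 0 ≤ 1 - ∑ i ∈ s, (σ i)⁻¹ by linarith
  refine nonneg_of_forall_nat_affine_nonneg (γ := ∑ i ∈ s, γ i / σ i) fun N => ?_
  have hsplit : ∑ i ∈ s, ((N : ℚ) - γ i) / σ i =
      N * ∑ i ∈ s, (σ i)⁻¹ - ∑ i ∈ s, γ i / σ i := by
    rw [mul_sum, ← sum_sub_distrib]
    exact sum_congr rfl fun i _ => by ring
  linarith [hcount N]

lemma not_injective_of_slope_linear {u : ℕ × ℕ → ℕ} {L β : ℚ} {γ : ℕ → ℚ}
    (h : ∀ m t, (u (m, t) : ℚ) = (L + β * m) * t + γ m) : ¬ Injective u := by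
  intro hu
  have hσ (m : ℕ) : 0 < L + β * m :=
    pos_of_injective_affine (hu.comp (Prod.mk_right_injective m)) (h m)
  have hβ : 0 ≤ β := nonneg_of_forall_nat_affine_nonneg (γ := L) fun m => by linarith [hσ m]
  have hL : 0 < L := by simpa using hσ 0
  obtain ⟨M, hM⟩ := exists_lt_harmonic (L + β)
  have hharmonic : (L + β)⁻¹ * harmonic M ≤ ∑ m ∈ range M, (L + β * m)⁻¹ := by
    rw [harmonic, mul_sum]
    refine sum_le_sum fun m _ => ?_
    rw [← mul_inv, Nat.cast_succ]
    exact inv_anti₀ (hσ m) (by nlinarith [hL, hβ, (Nat.cast_nonneg m : (0 : ℚ) ≤ m)])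
  have hle := hharmonic.trans (sum_inv_slope_le_one hu h (range M))
  rw [inv_mul_le_iff₀ (by linarith)] at hle
  linarith

section PackingPolynomial

variable {a b c d e f : ℚ} {n : ℕ × ℕ → ℕ}

lemma quadForm_nonneg_of_nat_valued
    (hF : ∀ x y : ℕ, (n (x, y) : ℚ) =
      (a * x ^ 2 + 2 * b * x * y + c * y ^ 2) / 2 + (d * x + e * y) / 2 + f) (x y : ℕ) :
    0 ≤ (a * x ^ 2 + 2 * b * x * y + c * y ^ 2) / 2 := by
  refine nonneg_of_forall_nat_quadratic_nonneg (B := (d * x + e * y) / 2) (C := f) fun t => ?_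
  have ht := hF (t * x) (t * y)
  push_cast at ht
  linarith [Nat.cast_nonneg (α := ℚ) (n (t * x, t * y))]

lemma quadForm_ne_zero_of_injective (hn : Injective n)
    (hF : ∀ x y : ℕ, (n (x, y) : ℚ) =
      (a * x ^ 2 + 2 * b * x * y + c * y ^ 2) / 2 + (d * x + e * y) / 2 + f)
    {x y : ℕ} (hy : y ≠ 0) :
    (a * x ^ 2 + 2 * b * x * y + c * y ^ 2) / 2 ≠ 0 := by
  intro hQ
  have hray : Injective fun q : ℕ × ℕ => (q.1 + q.2 * x, q.2 * y) := by
    rintro ⟨m, t⟩ ⟨m', t'⟩ heq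
    simp only [Prod.mk.injEq] at heq
    obtain rfl : t = t' := Nat.eq_of_mul_eq_mul_right (Nat.pos_of_ne_zero hy) heq.2
    simp_all
  refine not_injective_of_slope_linear (L := (d * x + e * y) / 2) (β := a * x + b * y)
    (γ := fun m => (a * m ^ 2 + d * m) / 2 + f) (fun m t => ?_) (hn.comp hray)
  simp only [comp_apply, hF]
  push_cast
  linear_combination (t : ℚ) ^ 2 * hQ

end PackingPolynomial

theorem packing_quadratic_form_posdef_general
    (a c f : ℕ) (b d e : ℤ)
    (F : ℕ × ℕ → ℚ)
    (hF : ∀ p : ℕ × ℕ, F p =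
      ((a : ℚ) * p.1 ^ 2 + 2 * (b : ℚ) * p.1 * p.2 + (c : ℚ) * p.2 ^ 2) / 2
        + ((d : ℚ) * p.1 + (e : ℚ) * p.2) / 2 + (f : ℚ))
    (hmaps : ∀ p : ℕ × ℕ, ∃ n : ℕ, F p = n)
    (hbij : ∀ n : ℕ, ∃! p : ℕ × ℕ, F p = n) :
    ∀ p : ℕ × ℕ, p ≠ (0, 0) →
      0 < ((a : ℚ) * p.1 ^ 2 + 2 * (b : ℚ) * p.1 * p.2 + (c : ℚ) * p.2 ^ 2) / 2 := by
  choose n hn using hmaps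
  have hinj : Injective n := fun p q hpq => (hbij (n p)).unique (hn p) (by rw [hn q, hpq])
  have hnF (x y : ℕ) : (n (x, y) : ℚ) =
      ((a : ℚ) * x ^ 2 + 2 * (b : ℚ) * x * y + (c : ℚ) * y ^ 2) / 2
        + ((d : ℚ) * x + (e : ℚ) * y) / 2 + (f : ℚ) := (hn (x, y)).symm.trans (hF (x, y))
  rintro ⟨x, y⟩ hp
  refine (quadForm_nonneg_of_nat_valued hnF x y).lt_of_ne' ?_
  by_cases hy : y = 0
  · subst hy
    have hx : x ≠ 0 := by rintro rfl; exact hp rfl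
    have hswap := quadForm_ne_zero_of_injective (a := c) (b := b) (c := a) (d := e) (e := d)
      (f := f) (x := 0) (hinj.comp Prod.swap_injective)
      (fun x y => by simp only [comp_apply, Prod.swap_prod_mk, hnF]; ring) hx
    convert hswap using 2; push_cast; ring
  · exact quadForm_ne_zero_of_injective hinj hnF hy

theorem packing_quadratic_form_posdef
    (a c f : ℕ) (b d e : ℤ) (hquad : ¬ (a = 0 ∧ b = 0 ∧ c = 0))
    (had : (a : ℤ) % 2 = d % 2) (hce : (c : ℤ) % 2 = e % 2)
    (F : ℕ × ℕ → ℚ)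
    (hF : ∀ p : ℕ × ℕ, F p =
      ((a : ℚ) * p.1 ^ 2 + 2 * (b : ℚ) * p.1 * p.2 + (c : ℚ) * p.2 ^ 2) / 2
        + ((d : ℚ) * p.1 + (e : ℚ) * p.2) / 2 + (f : ℚ))
    (hmaps : ∀ p : ℕ × ℕ, ∃ n : ℕ, F p = n)
    (hbij : ∀ n : ℕ, ∃! p : ℕ × ℕ, F p = n) :
    ∀ p : ℕ × ℕ, p ≠ (0, 0) →
      0 < ((a : ℚ) * p.1 ^ 2 + 2 * (b : ℚ) * p.1 * p.2 + (c : ℚ) * p.2 ^ 2) / 2 :=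
  packing_quadratic_form_posdef_general a c f b d e F hF hmaps hbij
end

section
/- If F(x,y) = (a x² + 2b x y + c y²)/2 + (d x + e y)/2 + f is a quadratic packing polynomial on ℕ², then a ≥ 1 and c ≥ 1. -/
theorem aux_a_pos (a c f : ℕ) (b d e : ℤ)
    (had : (a : ℤ) % 2 = d % 2)
    (F : ℕ × ℕ → ℚ)
    (hF : ∀ p : ℕ × ℕ, F p =
      ((a : ℚ) * p.1 ^ 2 + 2 * (b : ℚ) * p.1 * p.2 + (c : ℚ) * p.2 ^ 2) / 2
        + ((d : ℚ) * p.1 + (e : ℚ) * p.2) / 2 + (f : ℚ))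
    (hmaps : ∀ p : ℕ × ℕ, ∃ n : ℕ, F p = n)
    (hbij : ∀ n : ℕ, ∃! p : ℕ × ℕ, F p = n) : 1 ≤ a := by
  have hinj : ∀ p q : ℕ × ℕ, F p = F q → p = q := by
    intro p q h
    obtain ⟨n, hn⟩ := hmaps p
    obtain ⟨w, -, hu⟩ := hbij n
    exact (hu p hn).trans (hu q (h.symm.trans hn)).symm
  have hnonneg : ∀ p : ℕ × ℕ, 0 ≤ F p := by
    intro p
    obtain ⟨n, hn⟩ := hmaps p
    rw [hn]; exact n.cast_nonneg
  by_contra h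
  have ha : a = 0 := by omega
  subst ha
  have hd2 : d % 2 = 0 := by simpa using had.symm
  obtain ⟨m, hm⟩ : ∃ m : ℤ, d = 2 * m := ⟨d / 2, by omega⟩
  have hdq : (d : ℚ) = 2 * (m : ℚ) := by exact_mod_cast hm
  rcases le_or_gt m 0 with hm0 | hm1
  · rcases eq_or_lt_of_le hm0 with hmeq | hmlt
    · -- m = 0 : F(0,0) = F(1,0)
      have hd0 : d = 0 := by omega
      have heq : F (0, 0) = F (1, 0) := by
        rw [hF, hF]; simp [hd0]
      have := hinj _ _ heq
      simp [Prod.ext_iff] at this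
    · -- m ≤ -1 : F(f+1, 0) < 0
      have h1 := hnonneg (f + 1, 0)
      rw [hF] at h1
      have hmq : (m : ℚ) ≤ -1 := by exact_mod_cast (by omega : m ≤ -1)
      simp only at h1
      rw [hdq] at h1
      push_cast at h1
      nlinarith [(by positivity : (0:ℚ) ≤ (f:ℚ))]
  · -- m ≥ 1
    rcases le_or_gt 0 b with hb | hb
    · -- collision F(x1,0) = F(x2, 2m)
      set K : ℤ := 2 * c * m + e with hK
      set x2 : ℕ := K.natAbs with hx2
      have hx2K : 0 ≤ (x2 : ℤ) + K := by omega
      have hx1nn : 0 ≤ (2 * b + 1) * (x2 : ℤ) + K := by nlinarith [Int.natCast_nonneg x2]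
      set x1 : ℕ := ((2 * b + 1) * (x2 : ℤ) + K).toNat with hx1
      have hx1c : (x1 : ℤ) = (2 * b + 1) * (x2 : ℤ) + K := Int.toNat_of_nonneg hx1nn
      set y2 : ℕ := (2 * m).toNat with hy2
      have hy2c : (y2 : ℤ) = 2 * m := Int.toNat_of_nonneg (by omega)
      have heq : F (x1, 0) = F (x2, y2) := by
        rw [hF, hF]
        have h1 : (x1 : ℚ) = (2 * (b:ℚ) + 1) * (x2 : ℚ) + (2 * c * m + e) := by
          rw [hK] at hx1c; exact_mod_cast hx1c
        have h2 : (y2 : ℚ) = 2 * (m : ℚ) := by exact_mod_cast hy2c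
        simp only
        rw [h1, h2, hdq]
        push_cast
        ring
      have := hinj _ _ heq
      have hy20 : y2 ≠ 0 := by omega
      simp [Prod.ext_iff] at this
      exact hy20 this.2.symm
    · -- b ≤ -1 : negative value on row y0 = m+1
      set y0 : ℕ := (m + 1).toNat with hy0
      have hy0c : (y0 : ℤ) = m + 1 := Int.toNat_of_nonneg (by omega)
      have hy0q : (y0 : ℚ) = (m : ℚ) + 1 := by exact_mod_cast hy0c
      set N : ℕ := c * y0 ^ 2 + e.natAbs * y0 + f with hN
      have h1 := hnonneg (N + 1, y0)
      rw [hF] at h1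
      simp only at h1
      rw [hdq] at h1
      have hbm : (b : ℤ) * (m + 1) + m ≤ -1 := by nlinarith
      have hs : (b : ℚ) * y0 + m ≤ -1 := by
        rw [hy0q]; exact_mod_cast hbm
      have he : (e : ℚ) ≤ (e.natAbs : ℚ) := by rw [Nat.cast_natAbs]; exact Int.cast_le.mpr (le_abs_self e)
      have hNq : (N : ℚ) = c * (y0:ℚ) ^ 2 + (e.natAbs : ℚ) * y0 + f := by
        rw [hN]; push_cast; ring
      have hy0nn : (0:ℚ) ≤ y0 := by positivity
      push_cast at h1
      nlinarith [mul_le_mul_of_nonneg_right hs (by positivity : (0:ℚ) ≤ (N:ℚ) + 1),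
        mul_nonneg hy0nn (sub_nonneg.mpr he), (by positivity : (0:ℚ) ≤ (c:ℚ) * (y0:ℚ)^2)]

theorem packing_quadratic_a_c_pos
    (a c f : ℕ) (b d e : ℤ) (hquad : ¬ (a = 0 ∧ b = 0 ∧ c = 0))
    (had : (a : ℤ) % 2 = d % 2) (hce : (c : ℤ) % 2 = e % 2)
    (F : ℕ × ℕ → ℚ)
    (hF : ∀ p : ℕ × ℕ, F p =
      ((a : ℚ) * p.1 ^ 2 + 2 * (b : ℚ) * p.1 * p.2 + (c : ℚ) * p.2 ^ 2) / 2
        + ((d : ℚ) * p.1 + (e : ℚ) * p.2) / 2 + (f : ℚ))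
    (hmaps : ∀ p : ℕ × ℕ, ∃ n : ℕ, F p = n)
    (hbij : ∀ n : ℕ, ∃! p : ℕ × ℕ, F p = n) :
    1 ≤ a ∧ 1 ≤ c := by
  constructor
  · exact aux_a_pos a c f b d e had F hF hmaps hbij
  · set G : ℕ × ℕ → ℚ := fun p => F (p.2, p.1) with hGdef
    have hG : ∀ p : ℕ × ℕ, G p =
        ((c : ℚ) * p.1 ^ 2 + 2 * (b : ℚ) * p.1 * p.2 + (a : ℚ) * p.2 ^ 2) / 2
          + ((e : ℚ) * p.1 + (d : ℚ) * p.2) / 2 + (f : ℚ) := by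
      intro p
      show F (p.2, p.1) = _
      rw [hF (p.2, p.1)]
      simp only
      ring
    have hGmaps : ∀ p : ℕ × ℕ, ∃ n : ℕ, G p = n := fun p => hmaps (p.2, p.1)
    have hGbij : ∀ n : ℕ, ∃! p : ℕ × ℕ, G p = n := by
      intro n
      obtain ⟨p, hp, hu⟩ := hbij n
      refine ⟨(p.2, p.1), by simpa [hGdef] using hp, ?_⟩
      intro q hq
      have := hu (q.2, q.1) hq
      rw [Prod.ext_iff] at this ⊢
      exact ⟨this.2, this.1⟩
    exact aux_a_pos c a f b e d hce G hG hGmaps hGbij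
end

section
/- If F(x,y) = (a x² + 2b x y + c y²)/2 + (d x + e y)/2 + f is a quadratic packing polynomial on ℕ², then b ≤ 1. -/
/-!
Let `φ : ℕ × ℕ → ℕ` be the bijection given by `F`, and suppose `b ≥ 2`.

If `a = 0`, every row `x ↦ φ (x, y)` is an arithmetic progression with difference `b y + d / 2`.
For an injection whose rows are progressions with differences `s y`, counting the points of
value below `N` gives `∑ N / s y - O(1) ≤ N`, hence `∑ 1 / s y ≤ 1`; this fails for the harmonic
differences `b y + d / 2`. The case `c = 0` is the same after swapping the coordinates.

If `a, c ≥ 1`, then `2 φ (x, y) ≥ x² + 4xy + y² - O(x + y)` and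
`x² + 4xy + y² ≥ (3 (x + y) + min x y)² / 9`, so the `N + 1` preimages of `0, …, N` lie in a
kite of area about `6N / 7`, which is too small.
-/

open Finset Function

/-- Lattice points of the kite with vertices `0`, `(L/3, 0)`, `(L/7, L/7)`, `(0, L/3)`. -/
def kite (L : ℕ) : Finset (ℕ × ℕ) :=
  (range (L + 1) ×ˢ range (L + 1)).filter fun p => 3 * (p.1 + p.2) + min p.1 p.2 ≤ L

lemma mem_kite {L : ℕ} {p : ℕ × ℕ} : p ∈ kite L ↔ 3 * (p.1 + p.2) + min p.1 p.2 ≤ L := by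
  simp only [kite, mem_filter, mem_product, mem_range]
  omega

theorem card_kite_le (L : ℕ) : 21 * #(kite L) ≤ (L + 7) ^ 2 := by
  induction L using Nat.strong_induction_on with
  | _ L ih =>
  set inner := (kite L).filter fun p => 1 ≤ min p.1 p.2
  set axes : Finset (ℕ × ℕ) := range (L / 3 + 1) ×ˢ {0} ∪ {0} ×ˢ range (L / 3 + 1)
  have haxes : #axes ≤ 2 * (L / 3 + 1) := (card_union_le _ _).trans (by simp; omega)
  have hsplit : #(kite L) ≤ #inner + #axes := by
    refine (card_le_card fun p hp => ?_).trans (card_union_le _ _)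
    have := mem_kite.mp hp
    simp only [inner, axes, mem_union, mem_filter, mem_product, mem_range, mem_singleton, hp,
      true_and]
    omega
  have hinner : 21 * #inner ≤ L ^ 2 := by
    rcases lt_or_ge L 7 with hL | hL
    · have : inner = ∅ := filter_eq_empty_iff.mpr fun p hp => by have := mem_kite.mp hp; omega
      simp [this]
    · have hmaps : ∀ p ∈ inner, (p.1 - 1, p.2 - 1) ∈ kite (L - 7) := fun p hp => by
        simp only [inner, mem_filter, mem_kite] at hp ⊢
        omega
      have hinj : Set.InjOn (fun p : ℕ × ℕ => (p.1 - 1, p.2 - 1)) inner := fun p hp q hq h => by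
        simp only [inner, coe_filter, Set.mem_ofPred_eq, Prod.mk.injEq] at hp hq h
        ext <;> omega
      have := ih (L - 7) (by omega)
      rw [Nat.sub_add_cancel hL] at this
      linarith [card_le_card_of_injOn _ hmaps hinj]
  have : 3 * (L / 3) ≤ L := Nat.mul_div_le L 3
  nlinarith

theorem add_one_le_card_of_surjective {α : Type*} {φ : α → ℕ} (hφ : Surjective φ) {N : ℕ}
    {S : Finset α} (hS : ∀ p, φ p ≤ N → p ∈ S) : N + 1 ≤ #S := by
  rw [← card_range (N + 1)]
  refine card_le_card_of_injOn (surjInv hφ) (fun n hn => hS _ ?_) (injective_surjInv hφ).injOn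
  rw [surjInv_eq hφ]
  exact Nat.lt_succ_iff.mp (mem_range.mp hn)

lemma sq_three_mul_add_add_min_le (x y : ℕ) :
    (3 * (x + y) + min x y) ^ 2 ≤ 9 * (x ^ 2 + 4 * x * y + y ^ 2) := by
  rcases le_total x y with h | h
  · rw [min_eq_left h]; nlinarith
  · rw [min_eq_right h]; nlinarith

/-- With `K = 3 (3D + 7)`, the `2K² + 1` preimages of `0, …, 2K²` lie in `kite (6K + 3D)`, which
has at most `(19 (3D + 7))² / 21 < 2K² + 1` points. -/
theorem not_surjective_of_growth {φ : ℕ × ℕ → ℕ} (D : ℕ)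
    (h : ∀ x y, x ^ 2 + 4 * x * y + y ^ 2 ≤ 2 * φ (x, y) + D * (x + y)) : ¬ Surjective φ := by
  intro hφ
  set K := 3 * (3 * D + 7) with hK
  set L := 6 * K + 3 * D with hL
  have hmem : ∀ p, φ p ≤ 2 * K ^ 2 → p ∈ kite L := by
    rintro ⟨x, y⟩ hp
    rw [mem_kite]
    obtain ⟨z, hz⟩ : ∃ z, z = 3 * (x + y) + min x y := ⟨_, rfl⟩
    rw [← hz]
    have hDz : 3 * (D * (x + y)) ≤ D * z := by
      rw [mul_left_comm]; exact Nat.mul_le_mul_left D (by omega)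
    have hz2 : z ^ 2 ≤ 36 * K ^ 2 + 3 * (D * z) := by
      have := sq_three_mul_add_add_min_le x y
      rw [← hz] at this
      nlinarith [h x y]
    by_contra! hlt
    nlinarith [Nat.mul_le_mul_left z hlt, Nat.mul_le_mul_left K hlt]
  have hcard := add_one_le_card_of_surjective hφ hmem
  have hL : L + 7 = 19 * (3 * D + 7) := by omega
  have := card_kite_le L
  have hK2 : K ^ 2 = 9 * (3 * D + 7) ^ 2 := by rw [hK]; ring
  rw [hL] at this
  nlinarith

theorem slope_pos_of_injective {φ : ℕ × ℕ → ℕ} (hφ : Injective φ) {y : ℕ} {s r : ℝ}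
    (hrow : ∀ x : ℕ, (φ (x, y) : ℝ) = s * x + r) : 0 < s := by
  have hs : s ≠ 0 := by
    intro hs
    have : (φ (0, y) : ℝ) = φ (1, y) := by rw [hrow, hrow, hs]; simp
    simpa using hφ (Nat.cast_injective this)
  refine lt_of_le_of_ne (not_lt.mp fun hneg => ?_) hs.symm
  obtain ⟨x, hx⟩ := exists_nat_gt (r / -s)
  rw [div_lt_iff₀ (neg_pos.mpr hneg)] at hx
  linarith [hrow x, (φ (x, y)).cast_nonneg (α := ℝ)]

/-- In row `y` the first `⌊(N - r y) / s y⌋₊` points take values below `N`; injectivity bounds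
their number by `N`. -/
theorem sum_inv_slope_le_one_s11 {φ : ℕ × ℕ → ℕ} (hφ : Injective φ) {s r : ℕ → ℝ}
    (hrow : ∀ x y, (φ (x, y) : ℝ) = s y * x + r y) (Y : Finset ℕ) : ∑ y ∈ Y, (s y)⁻¹ ≤ 1 := by
  have hs : ∀ y, 0 < s y := fun y => slope_pos_of_injective hφ (hrow · y)
  have hcount : ∀ N : ℕ, ∑ y ∈ Y, ((N - r y) / s y - 1) ≤ N := by
    intro N
    set X : ℕ → ℕ := fun y => ⌊(N - r y) / s y⌋₊
    have hval : ∀ y x, x < X y → φ (x, y) < N := by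
      intro y x hx
      have hx' : ((x + 1 : ℕ) : ℝ) ≤ (N - r y) / s y := (Nat.le_floor_iff' x.succ_ne_zero).mp hx
      rw [le_div_iff₀ (hs y)] at hx'
      push_cast at hx'
      have : (φ (x, y) : ℝ) < N := by rw [hrow]; linarith [hs y]
      exact_mod_cast this
    have hcard : ∑ y ∈ Y, X y ≤ N := by
      calc ∑ y ∈ Y, X y = #(Y.sigma fun y => range (X y)) := by simp [card_sigma]
        _ ≤ #(range N) := by
          refine card_le_card_of_injOn (fun p => φ (p.2, p.1)) (fun p hp => ?_) fun p _ q _ h => ?_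
          · simp only [coe_sigma, Set.mem_sigma_iff, coe_range, Set.mem_Iio] at hp
            exact mem_range.mpr (hval _ _ hp.2)
          · obtain ⟨h2, h1⟩ := Prod.mk.inj (hφ h)
            exact Sigma.ext h1 (heq_of_eq h2)
        _ = N := card_range N
    calc ∑ y ∈ Y, ((N - r y) / s y - 1) ≤ ∑ y ∈ Y, (X y : ℝ) :=
          sum_le_sum fun y _ => by linarith [Nat.lt_floor_add_one ((N - r y) / s y)]
      _ ≤ N := by exact_mod_cast hcard
  by_contra! hY
  obtain ⟨N, hN⟩ := exists_nat_gt ((∑ y ∈ Y, (r y / s y + 1)) / (∑ y ∈ Y, (s y)⁻¹ - 1))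
  rw [div_lt_iff₀ (by linarith)] at hN
  have hsum : ∑ y ∈ Y, ((N - r y) / s y - 1)
      = N * ∑ y ∈ Y, (s y)⁻¹ - ∑ y ∈ Y, (r y / s y + 1) := by
    rw [mul_sum, ← sum_sub_distrib]
    exact sum_congr rfl fun y _ => by ring
  nlinarith [hcount N]

theorem not_injective_of_linear_row_slopes {φ : ℕ × ℕ → ℕ} {α β : ℝ} {r : ℕ → ℝ} (hα : 0 ≤ α)
    (hrow : ∀ x y, (φ (x, y) : ℝ) = (α * y + β) * x + r y) : ¬ Injective φ := by
  intro hφ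
  have hβ : 0 < β := by simpa using slope_pos_of_injective hφ (hrow · 0)
  have hsum : Summable fun y : ℕ => (α * y + β)⁻¹ :=
    summable_of_sum_le (fun y => by positivity) (sum_inv_slope_le_one_s11 hφ hrow)
  apply Real.not_summable_natCast_inv
  rw [← summable_nat_add_iff 1]
  refine (hsum.mul_left (α + β)).of_nonneg_of_le (fun y => by positivity) fun y => ?_
  rw [← div_eq_mul_inv, le_div_iff₀ (by positivity), Nat.cast_add_one]
  field_simp
  nlinarith [(Nat.cast_nonneg y : (0 : ℝ) ≤ y)]

theorem not_surjective_of_quadratic {φ : ℕ × ℕ → ℕ} {a b c d e f : ℝ} (ha : 1 ≤ a) (hb : 2 ≤ b)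
    (hc : 1 ≤ c) (hf : 0 ≤ f) (hφ : ∀ x y : ℕ, (φ (x, y) : ℝ) =
      (a * x ^ 2 + 2 * b * x * y + c * y ^ 2) / 2 + (d * x + e * y) / 2 + f) :
    ¬ Surjective φ := by
  obtain ⟨D, hD⟩ := exists_nat_ge (max |d| |e|)
  refine not_surjective_of_growth D fun x y => ?_
  have hd := neg_le_of_abs_le ((le_max_left _ _).trans hD)
  have he := neg_le_of_abs_le ((le_max_right _ _).trans hD)
  have hx := x.cast_nonneg (α := ℝ)
  have hy := y.cast_nonneg (α := ℝ)
  have : (x : ℝ) ^ 2 + 4 * x * y + y ^ 2 ≤ 2 * φ (x, y) + D * (x + y) := by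
    rw [hφ]
    nlinarith [mul_nonneg (sub_nonneg.mpr ha) (sq_nonneg (x : ℝ)),
      mul_nonneg (sub_nonneg.mpr hc) (sq_nonneg (y : ℝ)),
      mul_nonneg (mul_nonneg (sub_nonneg.mpr hb) hx) hy,
      mul_nonneg (neg_le_iff_add_nonneg.mp hd) hx, mul_nonneg (neg_le_iff_add_nonneg.mp he) hy]
  exact_mod_cast this

theorem packing_quadratic_b_le_one_general
    (a c f : ℕ) (b d e : ℤ)
    (F : ℕ × ℕ → ℚ)
    (hF : ∀ p : ℕ × ℕ, F p =
      ((a : ℚ) * p.1 ^ 2 + 2 * (b : ℚ) * p.1 * p.2 + (c : ℚ) * p.2 ^ 2) / 2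
        + ((d : ℚ) * p.1 + (e : ℚ) * p.2) / 2 + (f : ℚ))
    (hmaps : ∀ p : ℕ × ℕ, ∃ n : ℕ, F p = n)
    (hbij : ∀ n : ℕ, ∃! p : ℕ × ℕ, F p = n) :
    b ≤ 1 := by
  choose φ hφ using hmaps
  have hinj : Injective φ := fun p q h => (hbij _).unique (hφ p) (by rw [hφ q, h])
  have hsurj : Surjective φ := fun n => by
    obtain ⟨p, hp, -⟩ := hbij n
    exact ⟨p, by exact_mod_cast (hφ p).symm.trans hp⟩
  have hφF : ∀ x y : ℕ, (φ (x, y) : ℝ) =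
      (a * x ^ 2 + 2 * b * x * y + c * y ^ 2) / 2 + (d * x + e * y) / 2 + f := fun x y => by
    exact_mod_cast (hφ (x, y)).symm.trans (hF (x, y))
  by_contra! hb
  have hb2 : (2 : ℝ) ≤ b := by exact_mod_cast hb
  rcases Nat.eq_zero_or_pos a with rfl | ha
  · refine not_injective_of_linear_row_slopes (α := b) (β := d / 2)
      (r := fun y => c * y ^ 2 / 2 + e * y / 2 + f) (by linarith) (fun x y => ?_) hinj
    rw [hφF]; push_cast; ring
  rcases Nat.eq_zero_or_pos c with rfl | hc
  · refine not_injective_of_linear_row_slopes (φ := φ ∘ Prod.swap) (α := b) (β := e / 2)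
      (r := fun y => a * y ^ 2 / 2 + d * y / 2 + f) (by linarith) (fun x y => ?_)
      (hinj.comp Prod.swap_injective)
    rw [comp_apply, Prod.swap_prod_mk, hφF]; push_cast; ring
  exact not_surjective_of_quadratic (Nat.one_le_cast.mpr ha) hb2 (Nat.one_le_cast.mpr hc)
    f.cast_nonneg hφF hsurj

theorem packing_quadratic_b_le_one
    (a c f : ℕ) (b d e : ℤ) (hquad : ¬ (a = 0 ∧ b = 0 ∧ c = 0))
    (had : (a : ℤ) % 2 = d % 2) (hce : (c : ℤ) % 2 = e % 2)
    (F : ℕ × ℕ → ℚ)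
    (hF : ∀ p : ℕ × ℕ, F p =
      ((a : ℚ) * p.1 ^ 2 + 2 * (b : ℚ) * p.1 * p.2 + (c : ℚ) * p.2 ^ 2) / 2
        + ((d : ℚ) * p.1 + (e : ℚ) * p.2) / 2 + (f : ℚ))
    (hmaps : ∀ p : ℕ × ℕ, ∃ n : ℕ, F p = n)
    (hbij : ∀ n : ℕ, ∃! p : ℕ × ℕ, F p = n) :
    b ≤ 1 :=
  packing_quadratic_b_le_one_general a c f b d e F hF hmaps hbij
end

section
/- If F(x,y) = (a x² + 2b x y + c y²)/2 + (d x + e y)/2 + f is a quadratic packing polynomial on ℕ², then the discriminant D = b² - ac is a perfect square. -/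
/-!
Suppose `D = b² - ac` is not a square. Then `D` is a non-residue modulo some prime `p`
(a Jacobi symbol `J(D | n) = -1` is built by the Chinese remainder theorem, and one prime
factor of `n` inherits it). Modulo `p` the quadratic form has anisotropic discriminant, so
`2F - 2F(centre)` vanishes only at the centre of the conic: some residue class `r` of values
of `F` is taken only on a single residue class of `ℕ²` modulo `p`.

Since `F ≥ 0` rules out `b < 0 < D`, the quadratic part is positive definite on the
quadrant, so `F(z) < N` forces `|z| = O(√N)` and `F` grows by `O(√N)` under translations by
`[0, p)²`. Translating the `≈ N / p` points with `F`-values `≡ r` below `N` by `[0, p)²` gives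
`≈ p N` distinct points, all of `F`-value `N + O(√N)`, contradicting the bijectivity of `F`.
-/

theorem Nat.exists_prime_odd_factorization_of_not_isSquare {m : ℕ} (hm : ¬IsSquare m) :
    ∃ q, q.Prime ∧ Odd (m.factorization q) := by
  obtain ⟨s, t, rfl, hs⟩ := Nat.sq_mul_squarefree m
  have hs1 : s ≠ 1 := by rintro rfl; exact hm ⟨t, by ring⟩
  have ht0 : t ≠ 0 := by rintro rfl; exact hm ⟨0, by simp⟩
  obtain ⟨q, hq, hqs⟩ := Nat.exists_prime_and_dvd hs1
  refine ⟨q, hq, ?_⟩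
  rw [Nat.factorization_mul (pow_ne_zero 2 ht0) hs.ne_zero, Nat.factorization_pow,
    Finsupp.add_apply, Finsupp.smul_apply, smul_eq_mul,
    Nat.factorization_eq_one_of_squarefree hs hq hqs]
  exact odd_two_mul_add_one _

theorem exists_jacobiSym_eq_neg_one_of_odd_of_not_isSquare {m : ℕ} (hodd : Odd m)
    (hm : ¬IsSquare m) :
    ∃ n : ℕ, n % 8 = 1 ∧ jacobiSym n m = -1 := by
  obtain ⟨q, hq, hβ⟩ := Nat.exists_prime_odd_factorization_of_not_isSquare hm
  have hm0 : m ≠ 0 := by rintro rfl; exact hm ⟨0, rfl⟩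
  have hqm : q ∣ m := (hq.dvd_iff_one_le_factorization hm0).2 hβ.pos
  have hq2 : q ≠ 2 := by rintro rfl; exact (Nat.not_even_iff_odd.2 hodd) (even_iff_two_dvd.2 hqm)
  have := Fact.mk hq
  set R := m / q ^ m.factorization q
  have hR0 : R ≠ 0 := (Nat.ordCompl_pos q hm0).ne'
  obtain ⟨ζ, hζ⟩ := FiniteField.exists_nonsquare (F := ZMod q) (by rwa [ZMod.ringChar_zmod_n])
  have hcop : Nat.Coprime q (8 * R) :=
    Nat.Coprime.mul_right (Nat.Coprime.pow_right 3 ((Nat.coprime_primes hq Nat.prime_two).2 hq2))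
      (Nat.coprime_ordCompl hq hm0)
  obtain ⟨n, hnq, hnR⟩ := Nat.chineseRemainder hcop ζ.val 1
  refine ⟨n, (hnR.of_mul_right R : n ≡ 1 [MOD 8]), ?_⟩
  have hJq : jacobiSym n q = -1 := by
    rw [ZMod.nonsquare_iff_jacobiSym_eq_neg_one, Int.cast_natCast,
      (ZMod.natCast_eq_natCast_iff _ _ _).2 hnq, ZMod.natCast_zmod_val]
    exact hζ
  have hJR : jacobiSym n R = 1 := by
    rw [jacobiSym.mod_left' (b := R) (a₂ := 1), jacobiSym.one_left]
    exact_mod_cast (hnR.of_mul_left 8 : n ≡ 1 [MOD R])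
  rw [← Nat.ordProj_mul_ordCompl_eq_self m q,
    jacobiSym.mul_right' _ (pow_ne_zero _ hq.ne_zero) hR0, jacobiSym.pow_right, hJq, hJR,
    hβ.neg_one_pow, mul_one]

theorem jacobiSym_eq_one_of_mod_four_eq_one {s : ℤ} (hs : s = 1 ∨ s = -1) {n : ℕ}
    (hn : n % 4 = 1) : jacobiSym s n = 1 := by
  rcases hs with rfl | rfl
  · exact jacobiSym.one_left n
  · rw [jacobiSym.at_neg_one (Nat.odd_iff.2 (by omega)), ZMod.χ₄_nat_one_mod_four hn]

theorem exists_jacobiSym_eq_neg_one_of_not_isSquare_of_odd_sq {s : ℤ} (hs : s = 1 ∨ s = -1)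
    {α w : ℕ} (hw : Odd w) (hD : ¬IsSquare (s * (2 ^ α * (w * w : ℕ)))) :
    ∃ n : ℕ, jacobiSym (s * (2 ^ α * (w * w : ℕ))) n = -1 := by
  have hw8 : Nat.Coprime 8 w := Nat.Coprime.pow_left 3 (Nat.coprime_two_left.2 hw)
  obtain ⟨n, hn8, hnw⟩ := Nat.chineseRemainder hw8 (if Even α then 3 else 5) 1
  have hn8 : n % 8 = if Even α then 3 else 5 := by rw [hn8]; split_ifs <;> rfl
  have hn : Odd n := Nat.odd_iff.2 (by split_ifs at hn8 <;> omega)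
  have hJw : jacobiSym (w * w : ℕ) n = 1 := by
    rw [Nat.cast_mul, jacobiSym.mul_left, ← sq, jacobiSym.sq_one]
    simpa [Int.gcd_natCast_natCast, Nat.coprime_comm, Nat.Coprime] using hnw.gcd_eq
  refine ⟨n, ?_⟩
  rw [jacobiSym.mul_left, jacobiSym.mul_left, jacobiSym.pow_left, hJw, mul_one,
    jacobiSym.at_two hn, ZMod.χ₈_nat_mod_eight]
  rcases Nat.even_or_odd α with hα | hα
  · rw [if_pos hα] at hn8
    obtain rfl : s = -1 := hs.resolve_left fun hs1 => by
      obtain ⟨k, rfl⟩ := hα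
      exact hD ⟨2 ^ k * w, by rw [hs1]; push_cast; ring⟩
    rw [jacobiSym.at_neg_one hn, ZMod.χ₄_nat_three_mod_four (by omega), hn8,
      show ZMod.χ₈ ((3 : ℕ) : ZMod 8) = -1 by rfl, hα.neg_one_pow, mul_one]
  · rw [if_neg (Nat.not_even_iff_odd.2 hα)] at hn8
    rw [jacobiSym_eq_one_of_mod_four_eq_one hs (by omega), hn8, one_mul,
      show ZMod.χ₈ ((5 : ℕ) : ZMod 8) = -1 by rfl, hα.neg_one_pow]

theorem exists_jacobiSym_eq_neg_one_of_not_isSquare {D : ℤ} (hD : ¬IsSquare D) :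
    ∃ n : ℕ, jacobiSym D n = -1 := by
  have hD0 : D.natAbs ≠ 0 := by
    rintro h; exact hD ⟨0, by simpa using h⟩
  obtain ⟨α, m, hm, hDm⟩ := Nat.exists_eq_two_pow_mul_odd hD0
  obtain ⟨s, hs, rfl⟩ : ∃ s : ℤ, (s = 1 ∨ s = -1) ∧ D = s * (2 ^ α * m) := by
    rcases Int.natAbs_eq D with h | h
    · exact ⟨1, .inl rfl, by rw [h, hDm]; push_cast; ring⟩
    · exact ⟨-1, .inr rfl, by rw [h, hDm]; push_cast; ring⟩
  by_cases hmsq : IsSquare m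
  · obtain ⟨w, rfl⟩ := hmsq
    exact exists_jacobiSym_eq_neg_one_of_not_isSquare_of_odd_sq hs (Nat.odd_mul.1 hm).1 hD
  · obtain ⟨n, hn8, hJ⟩ := exists_jacobiSym_eq_neg_one_of_odd_of_not_isSquare hm hmsq
    have hn : Odd n := Nat.odd_iff.2 (by omega)
    refine ⟨n, ?_⟩
    rw [jacobiSym.mul_left, jacobiSym.mul_left, jacobiSym.pow_left,
      ← jacobiSym.quadratic_reciprocity_one_mod_four (by omega) hm, hJ,
      jacobiSym_eq_one_of_mod_four_eq_one hs (by omega), jacobiSym.at_two hn,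
      ZMod.χ₈_nat_mod_eight, hn8, show ZMod.χ₈ ((1 : ℕ) : ZMod 8) = 1 by rfl, one_pow,
      one_mul, one_mul]

theorem exists_prime_not_isSquare_intCast {D : ℤ} (hD : ¬IsSquare D) :
    ∃ p : ℕ, p.Prime ∧ ¬IsSquare (D : ZMod p) := by
  obtain ⟨n, hn⟩ := exists_jacobiSym_eq_neg_one_of_not_isSquare hD
  obtain ⟨p, hp, -, hJ⟩ := jacobiSym.eq_neg_one_at_prime_divisor_of_eq_neg_one hn
  have := Fact.mk hp
  exact ⟨p, hp, ZMod.nonsquare_iff_jacobiSym_eq_neg_one.1 hJ⟩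

def binaryQuadratic {R : Type*} [CommRing R] (a b c d e g x y : R) : R :=
  a * x ^ 2 + 2 * b * x * y + c * y ^ 2 + d * x + e * y + g

theorem eq_zero_of_sq_eq_mul_sq {K : Type*} [Field K] {D X Y : K} (hD : ¬IsSquare D)
    (h : X ^ 2 = D * Y ^ 2) : X = 0 ∧ Y = 0 := by
  by_cases hY : Y = 0
  · subst hY
    exact ⟨pow_eq_zero_iff two_ne_zero |>.1 (by simpa using h), rfl⟩
  · exact absurd ⟨X / Y, by field_simp; linear_combination -h⟩ hD

theorem exists_binaryQuadratic_level_subsingleton {K : Type*} [Field K] (h2 : (2 : K) ≠ 0)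
    {a b c : K} (hD : ¬IsSquare (b ^ 2 - a * c)) (d e g : K) :
    ∃ r X₀ Y₀ : K, ∀ X Y,
      binaryQuadratic a b c d e g X Y = r → X = X₀ ∧ Y = Y₀ := by
  have ha : a ≠ 0 := by rintro rfl; exact hD ⟨b, by ring⟩
  have hD0 : b ^ 2 - a * c ≠ 0 := by intro h; exact hD (h ▸ ⟨0, by ring⟩)
  obtain ⟨t, ht⟩ : ∃ t, 2 * (b ^ 2 - a * c) * t = 1 :=
    ⟨_, mul_inv_cancel₀ (mul_ne_zero h2 hD0)⟩
  set X₀ := (c * d - b * e) * t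
  set Y₀ := (a * e - b * d) * t
  -- `(X₀, Y₀)` is the centre of the conic: the gradient of the quadratic vanishes there
  have hX : 2 * (a * X₀ + b * Y₀) + d = 0 := by linear_combination (-d) * ht
  have hY : 2 * (b * X₀ + c * Y₀) + e = 0 := by linear_combination (-e) * ht
  refine ⟨binaryQuadratic a b c d e g X₀ Y₀, X₀, Y₀, fun X Y h => ?_⟩
  have hsq : (a * (X - X₀) + b * (Y - Y₀)) ^ 2 = (b ^ 2 - a * c) * (Y - Y₀) ^ 2 := by
    unfold binaryQuadratic at h
    linear_combination a * h - a * (X - X₀) * hX - a * (Y - Y₀) * hY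
  obtain ⟨hu, hv⟩ := eq_zero_of_sq_eq_mul_sq hD hsq
  have hY' : Y = Y₀ := sub_eq_zero.1 hv
  refine ⟨sub_eq_zero.1 ?_, hY'⟩
  simpa [hY', ha] using hu

theorem exists_fiber_subset_residueClass {p : ℕ} [Fact p.Prime] {a b c d e g : ℤ}
    (hD : ¬IsSquare ((b ^ 2 - a * c : ℤ) : ZMod p)) {ν : ℕ × ℕ → ℕ}
    (hν : ∀ x y : ℕ, 2 * (ν (x, y) : ℤ) = binaryQuadratic a b c d e g x y) :
    ∃ (r : ZMod p) (z₀ : ZMod p × ZMod p),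
      ∀ z, (ν z : ZMod p) = r → ((z.1 : ZMod p), (z.2 : ZMod p)) = z₀ := by
  have h2 : (2 : ZMod p) ≠ 0 :=
    Ring.two_ne_zero fun h => hD (FiniteField.isSquare_of_char_two h _)
  push_cast at hD
  obtain ⟨r, X₀, Y₀, hr⟩ := exists_binaryQuadratic_level_subsingleton h2 hD (d : ZMod p) e g
  refine ⟨r / 2, (X₀, Y₀), fun ⟨x, y⟩ hz => ?_⟩
  have hcast := congrArg (Int.cast : ℤ → ZMod p) (hν x y)
  push_cast [binaryQuadratic] at hcast
  obtain ⟨hx, hy⟩ := hr x y (by rw [binaryQuadratic, ← hcast, hz]; field_simp)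
  rw [hx, hy]

theorem exists_binaryQuadratic_neg {a b c : ℤ} (hc : 0 < c) (hb : b < 0)
    (hD : 0 < b ^ 2 - a * c) (d e g : ℤ) :
    ∃ x y : ℕ, binaryQuadratic a b c d e g x y < 0 := by
  lift c to ℕ using hc.le
  obtain ⟨m, rfl⟩ : ∃ m : ℕ, b = -m := ⟨b.natAbs, by omega⟩
  set L := (d * c + e * m).natAbs + g.natAbs + 1
  refine ⟨L * c, L * m, ?_⟩
  -- at `L • (c, -b)` the quadratic part is `-L² c D`
  have hray : binaryQuadratic a (-m) c d e g ↑(L * c) ↑(L * m)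
      = -(L : ℤ) ^ 2 * (c * ((-m) ^ 2 - a * c)) + L * (d * c + e * m) + g := by
    push_cast [binaryQuadratic]; ring
  have hcD : 1 ≤ (c : ℤ) * ((-m) ^ 2 - a * c) := by nlinarith
  have hlin : (L : ℤ) * (d * c + e * m) ≤ L * (d * c + e * m).natAbs :=
    mul_le_mul_of_nonneg_left Int.le_natAbs (by positivity)
  have hL : (L : ℤ) = (d * c + e * m).natAbs + g.natAbs + 1 := by push_cast [L]; ring
  rw [hray]
  nlinarith [Int.le_natAbs (a := g)]

theorem sq_add_le_mul_quadratic_of_nonneg {a b c x y : ℤ} (ha : 0 < a) (hc : 0 < c)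
    (hbD : 0 ≤ b ∨ b ^ 2 - a * c < 0) (hx : 0 ≤ x) (hy : 0 ≤ y) :
    (x + y) ^ 2 ≤ 2 * (a + c) * (a * x ^ 2 + 2 * b * x * y + c * y ^ 2) := by
  rcases hbD with hb | hD
  · have hQ : x ^ 2 + y ^ 2 ≤ a * x ^ 2 + 2 * b * x * y + c * y ^ 2 := by
      nlinarith [mul_nonneg (mul_nonneg hb hx) hy, sq_nonneg x, sq_nonneg y]
    nlinarith [sq_nonneg (x - y)]
  · -- `a Q = (a x + b y)² - D y²` and `c Q = (b x + c y)² - D x²`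
    nlinarith [sq_nonneg (a * x + b * y), sq_nonneg (b * x + c * y), sq_nonneg (x - y)]

theorem Nat.le_two_mul_mul_sqrt_add_one {s n K : ℕ} (h : s ^ 2 ≤ K * (n + s + 1)) :
    s ≤ 2 * K * (Nat.sqrt n + 1) := by
  by_contra! hs
  have hn : n + 1 ≤ (Nat.sqrt n + 1) ^ 2 := by rw [sq]; exact Nat.lt_succ_sqrt n
  rcases Nat.eq_zero_or_pos K with rfl | hK
  · simp_all
  set r := Nat.sqrt n + 1
  have h1 : K * (n + s + 1) ≤ K * r * r + K * s := by nlinarith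
  have h2 : 2 * K * r * s < s * s := Nat.mul_lt_mul_of_pos_right hs (by omega)
  have h3 : K * r * r ≤ K * r * s := Nat.mul_le_mul_left _ (by nlinarith)
  have h4 : K * s ≤ K * r * s := by nlinarith
  nlinarith

theorem exists_add_le_mul_sqrt {a b c d e g : ℤ} (ha : 0 < a) (hc : 0 < c)
    (hbD : 0 ≤ b ∨ b ^ 2 - a * c < 0) {ν : ℕ × ℕ → ℕ}
    (hν : ∀ x y : ℕ, 2 * (ν (x, y) : ℤ) = binaryQuadratic a b c d e g x y) :
    ∃ L : ℕ, ∀ z : ℕ × ℕ, z.1 + z.2 ≤ L * (Nat.sqrt (ν z) + 1) := by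
  set M := 2 + |d| + |e| + |g|
  set K := (2 * (a + c) * M).toNat
  have hK : (K : ℤ) = 2 * (a + c) * M := Int.toNat_of_nonneg (by positivity)
  refine ⟨2 * K, fun ⟨x, y⟩ => Nat.le_two_mul_mul_sqrt_add_one ?_⟩
  have hx : (0 : ℤ) ≤ x := x.cast_nonneg
  have hy : (0 : ℤ) ≤ y := y.cast_nonneg
  have hQ : a * x ^ 2 + 2 * b * x * y + c * (y : ℤ) ^ 2 ≤ M * (ν (x, y) + (x + y) + 1) := by
    have h := hν x y
    unfold binaryQuadratic at h
    nlinarith [neg_abs_le d, neg_abs_le e, neg_abs_le g, abs_nonneg d, abs_nonneg e,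
      abs_nonneg g, (ν (x, y)).cast_nonneg (α := ℤ)]
  zify
  rw [hK, mul_assoc]
  exact (sq_add_le_mul_quadratic_of_nonneg ha hc hbD hx hy).trans
    (mul_le_mul_of_nonneg_left hQ (by positivity))

theorem exists_apply_add_le {a b c d e g : ℤ} {ν : ℕ × ℕ → ℕ}
    (hν : ∀ x y : ℕ, 2 * (ν (x, y) : ℤ) = binaryQuadratic a b c d e g x y) (p : ℕ) :
    ∃ K : ℕ, ∀ z δ : ℕ × ℕ, δ.1 ≤ p → δ.2 ≤ p →
      ν (z + δ) ≤ ν z + K * (z.1 + z.2 + 1) := by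
  set M := |a| + |b| + |c| + |d| + |e|
  set K := (M * (p + 1) ^ 2).toNat
  have hK : (K : ℤ) = M * (p + 1) ^ 2 := Int.toNat_of_nonneg (by positivity)
  refine ⟨K, ?_⟩
  rintro ⟨x, y⟩ ⟨δ, ε⟩ (hδ : δ ≤ p) (hε : ε ≤ p)
  set P : ℤ := p + 1
  have hcoef (t m : ℤ) (hm : 0 ≤ m) (hmB : m ≤ 2 * P ^ 2 * (x + y + 1)) :
      t * m ≤ |t| * (2 * P ^ 2 * (x + y + 1)) :=
    (mul_le_mul_of_nonneg_right (le_abs_self t) hm).trans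
      (mul_le_mul_of_nonneg_left hmB (abs_nonneg t))
  have hx : (0 : ℤ) ≤ x := x.cast_nonneg
  have hy : (0 : ℤ) ≤ y := y.cast_nonneg
  have hδ0 : (0 : ℤ) ≤ δ := δ.cast_nonneg
  have hε0 : (0 : ℤ) ≤ ε := ε.cast_nonneg
  have hδ : (δ : ℤ) ≤ P := by simp only [P]; omega
  have hε : (ε : ℤ) ≤ P := by simp only [P]; omega
  have hP : 1 ≤ P := by simp only [P]; omega
  have hδ2 : (δ : ℤ) ≤ P ^ 2 := by nlinarith
  have hε2 : (ε : ℤ) ≤ P ^ 2 := by nlinarith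
  have h1 := hcoef a (2 * x * δ + δ ^ 2) (by positivity)
    (by nlinarith [mul_le_mul_of_nonneg_left hδ2 hx, mul_le_mul hδ hδ hδ0 (by omega)])
  have h2 := hcoef b (2 * (x * ε + y * δ + δ * ε)) (by positivity)
    (by nlinarith [mul_le_mul_of_nonneg_left hε2 hx, mul_le_mul_of_nonneg_left hδ2 hy,
      mul_le_mul hδ hε hε0 (by omega)])
  have h3 := hcoef c (2 * y * ε + ε ^ 2) (by positivity)
    (by nlinarith [mul_le_mul_of_nonneg_left hε2 hy, mul_le_mul hε hε hε0 (by omega)])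
  have h4 := hcoef d δ hδ0 (by nlinarith)
  have h5 := hcoef e ε hε0 (by nlinarith)
  have hdiff : 2 * (ν (x + δ, y + ε) : ℤ) - 2 * ν (x, y) = a * (2 * x * δ + δ ^ 2)
      + b * (2 * (x * ε + y * δ + δ * ε)) + c * (2 * y * ε + ε ^ 2) + d * δ + e * ε := by
    rw [hν, hν, binaryQuadratic, binaryQuadratic]; push_cast; ring
  have h2K : 2 * (ν (x + δ, y + ε) : ℤ) ≤ 2 * (ν (x, y) + K * (x + y + 1)) := by
    rw [hK]; linear_combination hdiff + h1 + h2 + h3 + h4 + h5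
  simp only [Prod.mk_add_mk]
  zify
  linarith

theorem exists_apply_add_le_add_mul_sqrt {a b c d e g : ℤ} (ha : 0 < a) (hc : 0 < c)
    (hbD : 0 ≤ b ∨ b ^ 2 - a * c < 0) {ν : ℕ × ℕ → ℕ}
    (hν : ∀ x y : ℕ, 2 * (ν (x, y) : ℤ) = binaryQuadratic a b c d e g x y) (p : ℕ) :
    ∃ C : ℕ, ∀ z δ : ℕ × ℕ, δ.1 ≤ p → δ.2 ≤ p →
      ν (z + δ) ≤ ν z + C * (Nat.sqrt (ν z) + 1) := by
  obtain ⟨L, hL⟩ := exists_add_le_mul_sqrt ha hc hbD hν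
  obtain ⟨K, hK⟩ := exists_apply_add_le hν p
  refine ⟨K * (L + 1), fun z δ hδ₁ hδ₂ => (hK z δ hδ₁ hδ₂).trans ?_⟩
  have := hL z
  have : K * (z.1 + z.2 + 1) ≤ K * ((L + 1) * (Nat.sqrt (ν z) + 1)) :=
    Nat.mul_le_mul_left K (by nlinarith)
  rw [← mul_assoc] at this
  omega

theorem Nat.eq_of_add_eq_add_of_modEq {a b m n p : ℕ} (hab : a ≡ b [MOD p])
    (h : a + m = b + n) (hm : m < p) (hn : n < p) : m = n :=
  (Nat.ModEq.add_left_cancel hab (h ▸ Nat.ModEq.refl _)).eq_of_lt_of_lt hm hn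

theorem Prod.eq_of_add_eq_add_of_modEq {p : ℕ} {z z' δ δ' : ℕ × ℕ}
    (hz : z.1 ≡ z'.1 [MOD p] ∧ z.2 ≡ z'.2 [MOD p]) (hδ : δ.1 < p ∧ δ.2 < p)
    (hδ' : δ'.1 < p ∧ δ'.2 < p) (h : z + δ = z' + δ') : z = z' ∧ δ = δ' := by
  obtain rfl : δ = δ' := Prod.ext
    (Nat.eq_of_add_eq_add_of_modEq hz.1 (congrArg Prod.fst h) hδ.1 hδ'.1)
    (Nat.eq_of_add_eq_add_of_modEq hz.2 (congrArg Prod.snd h) hδ.2 hδ'.2)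
  exact ⟨add_right_cancel h, rfl⟩

open Finset in
theorem not_bijective_of_fiber_subset_residueClass {p : ℕ} (hp : 2 ≤ p)
    {ν : ℕ × ℕ → ℕ} {r : ZMod p} {z₀ : ZMod p × ZMod p}
    (hfiber : ∀ z, (ν z : ZMod p) = r → ((z.1 : ZMod p), (z.2 : ZMod p)) = z₀) {C : ℕ}
    (hshift : ∀ z δ : ℕ × ℕ, δ.1 < p → δ.2 < p →
      ν (z + δ) ≤ ν z + C * (Nat.sqrt (ν z) + 1)) :
    ¬Function.Bijective ν := by
  intro hν
  have : NeZero p := ⟨by omega⟩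
  set P : ℕ → ℕ × ℕ := fun k => Function.surjInv hν.2 (r.val + p * k)
  have hνP (k : ℕ) : ν (P k) = r.val + p * k := Function.surjInv_eq hν.2 _
  have hPmod (k k' : ℕ) : (P k).1 ≡ (P k').1 [MOD p] ∧ (P k).2 ≡ (P k').2 [MOD p] := by
    have hres (k : ℕ) := hfiber (P k) (by simp [hνP])
    have := (hres k).trans (hres k').symm
    simp only [Prod.mk.injEq, ZMod.natCast_eq_natCast_iff] at this
    exact this
  obtain ⟨T, hT⟩ : ∃ T, T = C + 1 := ⟨_, rfl⟩
  obtain ⟨M, hM⟩ : ∃ M, M = p * T ^ 2 := ⟨_, rfl⟩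
  set f : ℕ × (ℕ × ℕ) → ℕ := fun t => ν (P t.1 + t.2)
  have hmaps : ∀ t ∈ range M ×ˢ (range p ×ˢ range p),
      f t ∈ range ((p * T) ^ 2 + C * (p * T + 1)) := by
    rintro ⟨k, δ⟩ ht
    simp only [mem_product, mem_range] at ht
    have hk : ν (P k) < (p * T) ^ 2 := by
      have : p * (k + 1) ≤ p * M := Nat.mul_le_mul_left p ht.1
      rw [hνP]; rw [hM] at this; nlinarith [r.val_lt]
    have hsqrt : Nat.sqrt (ν (P k)) < p * T := Nat.sqrt_lt'.2 hk
    have := hshift (P k) δ ht.2.1 ht.2.2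
    simp only [mem_range, f]
    nlinarith
  have hinj : Set.InjOn f (range M ×ˢ (range p ×ˢ range p) : Finset _) := by
    rintro ⟨k, δ⟩ ht ⟨k', δ'⟩ ht' h
    simp only [coe_product, Set.mem_prod, coe_range, Set.mem_Iio] at ht ht'
    obtain ⟨hP, rfl⟩ := Prod.eq_of_add_eq_add_of_modEq (hPmod k k') ht.2 ht'.2 (hν.1 h)
    have hk : r.val + p * k = r.val + p * k' := by rw [← hνP, ← hνP, hP]
    rw [Nat.eq_of_mul_eq_mul_left (by omega) (Nat.add_left_cancel hk)]
  have hcard := card_le_card_of_injOn f hmaps hinj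
  simp only [card_product, card_range] at hcard
  rw [hM] at hcard
  have hu : C + 1 ≤ p * T := by nlinarith
  have h2 : 2 * (p * T) ^ 2 ≤ p * (p * T) ^ 2 := Nat.mul_le_mul_right _ hp
  nlinarith

theorem exists_bijective_two_mul_eq_binaryQuadratic {a c f : ℕ} {b d e : ℤ}
    {F : ℕ × ℕ → ℚ}
    (hF : ∀ p : ℕ × ℕ, F p =
      ((a : ℚ) * p.1 ^ 2 + 2 * (b : ℚ) * p.1 * p.2 + (c : ℚ) * p.2 ^ 2) / 2
        + ((d : ℚ) * p.1 + (e : ℚ) * p.2) / 2 + (f : ℚ))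
    (hmaps : ∀ p : ℕ × ℕ, ∃ n : ℕ, F p = n)
    (hbij : ∀ n : ℕ, ∃! p : ℕ × ℕ, F p = n) :
    ∃ ν : ℕ × ℕ → ℕ, Function.Bijective ν ∧
      ∀ x y : ℕ, 2 * (ν (x, y) : ℤ) = binaryQuadratic (a : ℤ) b c d e (2 * f) x y := by
  choose ν hν using hmaps
  refine ⟨ν, ⟨fun z w h => (hbij (ν z)).unique (hν z) (h ▸ hν w), fun n => ?_⟩,
    fun x y => ?_⟩
  · obtain ⟨z, hz, -⟩ := hbij n
    exact ⟨z, by exact_mod_cast (hν z).symm.trans hz⟩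
  · have h : ((2 * ν (x, y) : ℤ) : ℚ)
        = ((binaryQuadratic (a : ℤ) b c d e (2 * f) x y : ℤ) : ℚ) := by
      push_cast [binaryQuadratic]
      rw [← hν, hF]
      ring
    exact_mod_cast h

theorem packing_quadratic_discriminant_is_square_general
    (a c f : ℕ) (b d e : ℤ)
    (F : ℕ × ℕ → ℚ)
    (hF : ∀ p : ℕ × ℕ, F p =
      ((a : ℚ) * p.1 ^ 2 + 2 * (b : ℚ) * p.1 * p.2 + (c : ℚ) * p.2 ^ 2) / 2
        + ((d : ℚ) * p.1 + (e : ℚ) * p.2) / 2 + (f : ℚ))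
    (hmaps : ∀ p : ℕ × ℕ, ∃ n : ℕ, F p = n)
    (hbij : ∀ n : ℕ, ∃! p : ℕ × ℕ, F p = n) :
    ∃ t : ℤ, b ^ 2 - (a : ℤ) * c = t ^ 2 := by
  by_contra hsq
  have hD : ¬IsSquare (b ^ 2 - (a : ℤ) * c) := fun ⟨t, ht⟩ => hsq ⟨t, by rw [ht, sq]⟩
  have ha : (0 : ℤ) < a :=
    Int.natCast_pos.2 (Nat.pos_of_ne_zero fun h => hD ⟨b, by simp [h, sq]⟩)
  have hc : (0 : ℤ) < c :=
    Int.natCast_pos.2 (Nat.pos_of_ne_zero fun h => hD ⟨b, by simp [h, sq]⟩)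
  obtain ⟨ν, hνbij, hν⟩ := exists_bijective_two_mul_eq_binaryQuadratic hF hmaps hbij
  have hbD : 0 ≤ b ∨ b ^ 2 - a * c < 0 := by
    by_contra! h
    obtain ⟨x, y, hneg⟩ := exists_binaryQuadratic_neg hc h.1
      (h.2.lt_of_ne fun h0 => hD ⟨0, by rw [← h0]; ring⟩) d e (2 * f)
    linarith [hν x y, (ν (x, y)).cast_nonneg (α := ℤ)]
  obtain ⟨p, hp, hDp⟩ := exists_prime_not_isSquare_intCast hD
  have := Fact.mk hp
  obtain ⟨r, z₀, hfiber⟩ := exists_fiber_subset_residueClass hDp hν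
  obtain ⟨C, hC⟩ := exists_apply_add_le_add_mul_sqrt ha hc hbD hν p
  exact not_bijective_of_fiber_subset_residueClass hp.two_le hfiber
    (fun z δ hδ₁ hδ₂ => hC z δ hδ₁.le hδ₂.le) hνbij

theorem packing_quadratic_discriminant_is_square
    (a c f : ℕ) (b d e : ℤ) (hquad : ¬ (a = 0 ∧ b = 0 ∧ c = 0))
    (had : (a : ℤ) % 2 = d % 2) (hce : (c : ℤ) % 2 = e % 2)
    (F : ℕ × ℕ → ℚ)
    (hF : ∀ p : ℕ × ℕ, F p =
      ((a : ℚ) * p.1 ^ 2 + 2 * (b : ℚ) * p.1 * p.2 + (c : ℚ) * p.2 ^ 2) / 2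
        + ((d : ℚ) * p.1 + (e : ℚ) * p.2) / 2 + (f : ℚ))
    (hmaps : ∀ p : ℕ × ℕ, ∃ n : ℕ, F p = n)
    (hbij : ∀ n : ℕ, ∃! p : ℕ × ℕ, F p = n) :
    ∃ t : ℤ, b ^ 2 - (a : ℤ) * c = t ^ 2 :=
  packing_quadratic_discriminant_is_square_general a c f b d e F hF hmaps hbij
end

section
/- If F(x,y) = (x+y)(x+y+e)/2 + g x + f maps ℕ² bijectively onto ℕ, where e is an odd integer, g a positive integer and f a nonnegative integer, then e = 1, g = 1, and f = 0 (so F = C1). -/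
theorem packing_forces_cantor
    (e g : ℤ) (f : ℕ) (he : Odd e) (hg : 0 < g)
    (F : ℕ × ℕ → ℚ)
    (hF : ∀ p : ℕ × ℕ, F p =
      ((p.1 : ℚ) + p.2) * ((p.1 : ℚ) + p.2 + e) / 2 + (g : ℚ) * p.1 + (f : ℚ))
    (hmaps : ∀ p : ℕ × ℕ, ∃ n : ℕ, F p = n)
    (hbij : ∀ n : ℕ, ∃! p : ℕ × ℕ, F p = n) :
    e = 1 ∧ g = 1 ∧ f = 0 := by
  have key : ∀ (x y n : ℕ), F (x, y) = n →
      ((x:ℤ)+y)*((x:ℤ)+y+e) + 2*g*x + 2*f = 2*n := by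
    intro x y n h
    rw [hF] at h
    simp only at h
    have h2 : (((x:ℤ)+y)*((x:ℤ)+y+e) + 2*g*x + 2*f : ℚ) = 2*n := by
      push_cast
      push_cast at h
      linarith
    exact_mod_cast h2
  -- Step 1: e ≥ 1, by injectivity at value f
  have he1 : 1 ≤ e := by
    by_contra h
    push_neg at h
    have hne : e ≤ -1 := by rcases he with ⟨k, hk⟩; omega
    set m : ℕ := (-e).toNat with hm
    have hmz : (m : ℤ) = -e := by omega
    have hm1 : 1 ≤ m := by omega
    have h1 : F (0, m) = (f : ℚ) := by
      rw [hF]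
      simp only
      have hq : (m : ℚ) + e = 0 := by
        have : (((m:ℤ) : ℚ)) + e = 0 := by rw [hmz]; push_cast; ring
        push_cast at this ⊢; linarith
      push_cast
      push_cast at hq
      rw [show ((0:ℚ) + m) * (0 + m + e) = (m) * ((m:ℚ) + e) by ring, hq]
      ring
    have h2 : F (0, 0) = (f : ℚ) := by rw [hF]; push_cast; ring
    obtain ⟨p, -, hp⟩ := hbij f
    have heq := (hp (0, m) h1).trans (hp (0, 0) h2).symm
    have : m = 0 := by simpa using congrArg Prod.snd heq
    omega
  -- Step 2: f = 0, by surjectivity at 0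
  obtain ⟨⟨x0, y0⟩, h0, -⟩ := hbij 0
  have k0 := key x0 y0 0 h0
  push_cast at k0
  have hx0 : (0:ℤ) ≤ (x0:ℤ) := Int.ofNat_nonneg x0
  have hy0 : (0:ℤ) ≤ (y0:ℤ) := Int.ofNat_nonneg y0
  have hf : f = 0 := by
    have hfz : (f:ℤ) ≤ 0 := by
      nlinarith [mul_nonneg hg.le hx0, mul_nonneg (add_nonneg hx0 hy0)
        (by linarith : (0:ℤ) ≤ (x0:ℤ)+y0+e)]
    omega
  -- Step 3: e = 1, by surjectivity at 1
  obtain ⟨⟨x1, y1⟩, h1, -⟩ := hbij 1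
  have k1 := key x1 y1 1 h1
  push_cast at k1
  have hx1 : (0:ℤ) ≤ (x1:ℤ) := Int.ofNat_nonneg x1
  have hy1 : (0:ℤ) ≤ (y1:ℤ) := Int.ofNat_nonneg y1
  have hee : e = 1 := by
    by_contra h
    have he3 : 3 ≤ e := by rcases he with ⟨k, hk⟩; omega
    have hs0 : x1 + y1 = 0 := by
      by_contra hs
      have hs1 : (1:ℤ) ≤ (x1:ℤ) + y1 := by
        have : 1 ≤ x1 + y1 := by omega
        exact_mod_cast this
      nlinarith [mul_nonneg hg.le hx1, Int.ofNat_nonneg f,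
        mul_nonneg (by linarith : (0:ℤ) ≤ (x1:ℤ)+y1-1) (by linarith : (0:ℤ) ≤ (x1:ℤ)+y1+e)]
    have hx : x1 = 0 := by omega
    have hy : y1 = 0 := by omega
    subst hx hy
    norm_num [hf] at k1
  subst hee
  -- Step 4: g = 1, by surjectivity at 2
  obtain ⟨⟨x2, y2⟩, h2, -⟩ := hbij 2
  have k2 := key x2 y2 2 h2
  push_cast at k2
  have hx2 : (0:ℤ) ≤ (x2:ℤ) := Int.ofNat_nonneg x2
  have hy2 : (0:ℤ) ≤ (y2:ℤ) := Int.ofNat_nonneg y2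
  have hg1 : g = 1 := by
    by_contra h
    have hg2 : 2 ≤ g := by omega
    have hsle : x2 + y2 ≤ 1 := by
      by_contra hs
      have hs2 : (2:ℤ) ≤ (x2:ℤ) + y2 := by
        have : 2 ≤ x2 + y2 := by omega
        exact_mod_cast this
      nlinarith [mul_nonneg hg.le hx2, Int.ofNat_nonneg f,
        mul_nonneg (by linarith : (0:ℤ) ≤ (x2:ℤ)+y2-2) (by linarith : (0:ℤ) ≤ (x2:ℤ)+y2+1)]
    have hxle : x2 ≤ 1 := by omega
    have hyle : y2 ≤ 1 := by omega
    interval_cases x2 <;> interval_cases y2 <;> norm_num [hf] at k2 <;> omega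
  exact ⟨rfl, hg1, hf⟩
end

section
/- For an integer s ≥ 2, the polynomial F(x,y) = ((x - (s-1)y)² + x + (3-s)y)/2 is a bijection from the integer sector I(1/s) = {(x,y) ∈ ℕ² : s·y ≤ x} onto ℕ. -/
private lemma aux_exists (n : ℕ) :
    ∃ q : ℕ × ℕ, q.2 ≤ q.1 ∧ q.1 * (q.1 + 1) + 2 * q.2 = 2 * n := by
  induction n with
  | zero => exact ⟨(0, 0), by simp⟩
  | succ n ih =>
    obtain ⟨⟨t, y⟩, hy, he⟩ := ih
    simp only at hy he
    rcases lt_or_eq_of_le hy with h | h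
    · exact ⟨(t, y + 1), by simpa using h, by simp only; linarith⟩
    · exact ⟨(t + 1, 0), by simp, by simp only; nlinarith⟩

private lemma aux_unique {t y t' y' n : ℕ} (hy : y ≤ t) (hy' : y' ≤ t')
    (h : t * (t + 1) + 2 * y = 2 * n) (h' : t' * (t' + 1) + 2 * y' = 2 * n) :
    t = t' ∧ y = y' := by
  have ht : t = t' := by
    rcases lt_trichotomy t t' with hl | he | hl
    · nlinarith
    · exact he
    · nlinarith
  subst ht
  refine ⟨rfl, by nlinarith⟩

theorem sector_packing_polynomial (s : ℤ) (hs : 2 ≤ s) :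
    (∀ p : ℕ × ℕ, s * (p.2 : ℤ) ≤ (p.1 : ℤ) →
      ∃ n : ℕ,
        (((p.1 : ℚ) - (s - 1) * p.2) ^ 2 + p.1 + (3 - s) * p.2) / 2 = n) ∧
    (∀ n : ℕ, ∃! p : ℕ × ℕ, s * p.2 ≤ (p.1 : ℤ) ∧
        (((p.1 : ℚ) - (s - 1) * p.2) ^ 2 + p.1 + (3 - s) * p.2) / 2 = n) := by
  constructor
  · rintro ⟨x, y⟩ h
    simp only at h ⊢
    have htnn : (0 : ℤ) ≤ (x : ℤ) - (s - 1) * y := by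
      have : (0 : ℤ) ≤ (y : ℤ) := Int.natCast_nonneg y
      nlinarith
    set t : ℕ := ((x : ℤ) - (s - 1) * y).toNat with htdef
    have htz : (t : ℤ) = (x : ℤ) - (s - 1) * y := Int.toNat_of_nonneg htnn
    have heven : 2 ∣ t * (t + 1) + 2 * y := by
      rcases Nat.even_mul_succ_self t with ⟨k, hk⟩
      exact ⟨k + y, by omega⟩
    refine ⟨(t * (t + 1) + 2 * y) / 2, ?_⟩
    have h2nat : 2 * ((t * (t + 1) + 2 * y) / 2) = t * (t + 1) + 2 * y :=
      Nat.mul_div_cancel' heven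
    have h2q : ((((t * (t + 1) + 2 * y) / 2 : ℕ)) : ℚ) * 2 = (t : ℚ) ^ 2 + t + 2 * y := by
      have : ((2 * ((t * (t + 1) + 2 * y) / 2) : ℕ) : ℚ) = ((t * (t + 1) + 2 * y : ℕ) : ℚ) := by
        exact_mod_cast congrArg (Nat.cast : ℕ → ℚ) h2nat
      push_cast at this
      ring_nf
      ring_nf at this
      linarith
    have hq : (x : ℚ) = (t : ℚ) + ((s : ℚ) - 1) * y := by
      have := congrArg (Int.cast : ℤ → ℚ) htz
      push_cast at this
      linarith
    rw [div_eq_iff (two_ne_zero), hq]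
    linear_combination -h2q
  · intro n
    obtain ⟨⟨t, y⟩, hy, he⟩ := aux_exists n
    simp only at hy he
    have hk : (0 : ℤ) ≤ s - 1 := by omega
    set k : ℕ := (s - 1).toNat with hkdef
    have hkz : (k : ℤ) = s - 1 := Int.toNat_of_nonneg hk
    refine ⟨(t + k * y, y), ⟨?_, ?_⟩, ?_⟩
    · simp only
      push_cast
      rw [hkz]
      have : (y : ℤ) ≤ (t : ℤ) := by exact_mod_cast hy
      nlinarith
    · simp only
      have hkq : (k : ℚ) = (s : ℚ) - 1 := by exact_mod_cast hkz
      have hx : ((t + k * y : ℕ) : ℚ) = (t : ℚ) + ((s : ℚ) - 1) * y := by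
        push_cast; rw [hkq]
      have hq2 : (t : ℚ) ^ 2 + t + 2 * y = (n : ℚ) * 2 := by
        have : ((t * (t + 1) + 2 * y : ℕ) : ℚ) = ((2 * n : ℕ) : ℚ) := by exact_mod_cast he
        push_cast at this
        ring_nf at this ⊢
        linarith
      rw [div_eq_iff (two_ne_zero : (2:ℚ) ≠ 0), hx]
      linear_combination hq2
    · rintro ⟨x', y'⟩ ⟨h1, h2⟩
      simp only at h1 h2
      have htnn : (0 : ℤ) ≤ (x' : ℤ) - (s - 1) * y' := by
        have : (0 : ℤ) ≤ (y' : ℤ) := Int.natCast_nonneg y'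
        nlinarith
      set t' : ℕ := ((x' : ℤ) - (s - 1) * y').toNat with ht'def
      have htz : (t' : ℤ) = (x' : ℤ) - (s - 1) * y' := Int.toNat_of_nonneg htnn
      have hy' : y' ≤ t' := by
        have : (y' : ℤ) ≤ (t' : ℤ) := by rw [htz]; nlinarith [Int.natCast_nonneg y']
        exact_mod_cast this
      have hq : (x' : ℚ) = (t' : ℚ) + ((s : ℚ) - 1) * y' := by
        have := congrArg (Int.cast : ℤ → ℚ) htz
        push_cast at this
        linarith
      have he' : t' * (t' + 1) + 2 * y' = 2 * n := by
        have hq2 : ((t' * (t' + 1) + 2 * y' : ℕ) : ℚ) = ((2 * n : ℕ) : ℚ) := by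
          rw [div_eq_iff (two_ne_zero : (2:ℚ) ≠ 0)] at h2
          rw [hq] at h2
          push_cast
          linear_combination h2
        exact_mod_cast hq2
      obtain ⟨ht, hyy⟩ := aux_unique hy' hy he' he
      have hx' : x' = t + k * y := by
        have : (x' : ℤ) = (t : ℤ) + (s - 1) * y := by
          rw [← ht, ← hyy]; linarith [htz]
        have h2 : ((t + k * y : ℕ) : ℤ) = (t : ℤ) + (s - 1) * y := by
          push_cast; rw [hkz]
        exact_mod_cast this.trans h2.symm
      exact Prod.ext hx' hyy
end
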